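/- arXiv:1302.4338 — 8 statements merged into one kernel-verified Lean document; each statement's English description precedes it below -/
import Mathlib

section
/- Suppose e > 1 and z ∈ L((σ)) satisfies D(D(z)) = 2z³ + t·z + α. Then every coefficient of z at an index not divisible by e is zero (i.e., z lies in the subfield L((σ^e)) of Laurent series supported on multiples of e). -/
/-!
On lowest terms `D` acts like `(γ/e) σ^(1-e) d/dσ`: it lowers orders by `e` and preserves residues
mod `e`. Comparing lowest coefficients in `D² z = 2z³ + tz + α` shows that `z` has a pole of order
at most `e`, whose coefficient `a` at `σ^(-e)` satisfies `a (a² - γ²) = 0`. If `m` were the least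
index outside `eℤ` with `z_m ≠ 0`, the coefficient at `σ^(m-2e)` would give
`(m - e) m (γ/e)² = 6a²`, i.e. `m ∈ {0, e, 3e, -2e} ⊆ eℤ`.
-/

/-- The field of formal Laurent series over a field of characteristic zero has
characteristic zero. -/
instance {L : Type*} [Field L] [CharZero L] : CharZero (LaurentSeries L) where
  cast_injective m n h := by
    have hc : (HahnSeries.C (m : L) : LaurentSeries L) = HahnSeries.C (n : L) := by
      rw [map_natCast, map_natCast]; exact h
    exact Nat.cast_injective (HahnSeries.C_injective hc)

open HahnSeries

namespace LaurentSeries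

section Products

variable {R : Type*} [Semiring R]

theorem coeff_mul_eq_sum_of_subset {x y : LaurentSeries R} {n : ℤ} (S : Finset (ℤ × ℤ))
    (hS : ∀ p ∈ S, p.1 + p.2 = n)
    (h : ∀ i j, i + j = n → x.coeff i ≠ 0 → y.coeff j ≠ 0 → (i, j) ∈ S) :
    (x * y).coeff n = ∑ p ∈ S, x.coeff p.1 * y.coeff p.2 := by
  rw [coeff_mul]
  refine Finset.sum_subset (fun p hp => ?_) (fun p hpS hp => ?_)
  · rw [Finset.mem_antidiagonal] at hp
    exact h p.1 p.2 hp.2.2 hp.1 hp.2.1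
  · rw [Finset.mem_antidiagonal] at hp
    by_cases hx : x.coeff p.1 = 0
    · rw [hx, zero_mul]
    by_cases hy : y.coeff p.2 = 0
    · rw [hy, mul_zero]
    exact absurd ⟨hx, hy, hS p hpS⟩ hp

theorem coeff_mul_of_le_add {x y : LaurentSeries R} {N M : ℤ}
    (hx : ∀ i < N, x.coeff i = 0) (hy : ∀ j < M, y.coeff j = 0) {k : ℤ} (hk : k ≤ N + M) :
    (x * y).coeff k = if k = N + M then x.coeff N * y.coeff M else 0 := by
  have hpair : ∀ i j, i + j = k → x.coeff i ≠ 0 → y.coeff j ≠ 0 → i = N ∧ j = M := by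
    intro i j hij hi hj
    have := not_lt.1 (mt (hx i) hi)
    have := not_lt.1 (mt (hy j) hj)
    omega
  split_ifs with hkNM
  · rw [coeff_mul_eq_sum_of_subset {(N, M)} (by simp [hkNM]) (by simpa using hpair)]
    simp
  · rw [coeff_mul_eq_sum_of_subset ∅ (by simp) fun i j hij hi hj => ?_, Finset.sum_empty]
    obtain ⟨rfl, rfl⟩ := hpair i j hij hi hj
    exact absurd hij.symm hkNM

theorem coeff_pow_three_mul {x : LaurentSeries R} {N : ℤ} (hx : ∀ i < N, x.coeff i = 0) :
    (x ^ 3).coeff (3 * N) = x.coeff N ^ 3 := by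
  have hsq : ∀ i < N + N, (x * x).coeff i = 0 := fun i hi => by
    rw [coeff_mul_of_le_add hx hx hi.le, if_neg hi.ne]
  rw [pow_three', show 3 * N = N + N + N by ring, coeff_mul_of_le_add hsq hx le_rfl, if_pos rfl,
    coeff_mul_of_le_add hx hx le_rfl, if_pos rfl, pow_three']

/-- For `k ∉ eℤ`, a product `x_i y_j` contributing to the `k`-th coefficient has `i ∉ eℤ` or
`j ∉ eℤ`; the bounds below then leave only the two pairs `(M, N')` and `(N, M')`. -/
theorem coeff_mul_of_not_dvd {e : ℤ} {x y : LaurentSeries R} {N M N' M' : ℤ}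
    (hx : ∀ i < N, x.coeff i = 0) (hx' : ∀ i, ¬ e ∣ i → i < M → x.coeff i = 0)
    (hy : ∀ j < N', y.coeff j = 0) (hy' : ∀ j, ¬ e ∣ j → j < M' → y.coeff j = 0)
    (hNM : N < M) (hsum : M + N' = N + M') {k : ℤ} (hk : ¬ e ∣ k) (hkle : k ≤ M + N') :
    (x * y).coeff k =
      if k = M + N' then x.coeff M * y.coeff N' + x.coeff N * y.coeff M' else 0 := by
  have hpair : ∀ i j, i + j = k → x.coeff i ≠ 0 → y.coeff j ≠ 0 →
      k = M + N' ∧ (i = M ∧ j = N' ∨ i = N ∧ j = M') := by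
    intro i j hij hi hj
    have := not_lt.1 (mt (hx i) hi)
    have := not_lt.1 (mt (hy j) hj)
    by_cases hei : e ∣ i
    · have hej : ¬ e ∣ j := fun hej => hk (hij ▸ dvd_add hei hej)
      have := not_lt.1 (mt (hy' j hej) hj)
      omega
    · have := not_lt.1 (mt (hx' i hei) hi)
      omega
  split_ifs with hkMN
  · rw [coeff_mul_eq_sum_of_subset {(M, N'), (N, M')} (by simp [hkMN, hsum])
      (fun i j hij hi hj => by simpa using (hpair i j hij hi hj).2)]
    rw [Finset.sum_pair (by simp [hNM.ne'])]
  · rw [coeff_mul_eq_sum_of_subset ∅ (by simp) fun i j hij hi hj => ?_, Finset.sum_empty]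
    exact absurd (hpair i j hij hi hj).1 hkMN

theorem coeff_pow_three_of_not_dvd {R : Type*} [CommSemiring R] {e : ℤ} {z : LaurentSeries R}
    {m : ℤ}    (hz : ∀ i < -e, z.coeff i = 0) (hz' : ∀ i, ¬ e ∣ i → i < m → z.coeff i = 0)
    (hm : ¬ e ∣ m) (hlt : -e < m) :
    (z ^ 3).coeff (m - 2 * e) = 3 * z.coeff (-e) ^ 2 * z.coeff m := by
  have hsq : ∀ i < -e + -e, (z * z).coeff i = 0 := fun i hi => by
    rw [coeff_mul_of_le_add hz hz hi.le, if_neg hi.ne]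
  have hsq' : ∀ i, ¬ e ∣ i → i < m + -e → (z * z).coeff i = 0 := fun i hi hi' => by
    rw [coeff_mul_of_not_dvd hz hz' hz hz' hlt (add_comm _ _) hi hi'.le, if_neg hi'.ne]
  have hm1 : ¬ e ∣ m + -e := (dvd_add_left (dvd_neg.2 dvd_rfl)).not.2 hm
  have hm2 : ¬ e ∣ m + -e + -e := (dvd_add_left (dvd_neg.2 dvd_rfl)).not.2 hm1
  rw [pow_three', show m - 2 * e = m + -e + -e by ring,
    coeff_mul_of_not_dvd hsq hsq' hz hz' (by omega) (by ring) hm2 le_rfl, if_pos rfl,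
    coeff_mul_of_not_dvd hz hz' hz hz' hlt (add_comm _ _) hm1 le_rfl, if_pos rfl,
    coeff_mul_of_le_add hz hz le_rfl, if_pos rfl]
  ring

end Products

def IsPowerSeriesInPow {R : Type*} [Zero R] (e : ℤ) (f : LaurentSeries R) : Prop :=
  ∀ n, (n < 0 ∨ ¬ e ∣ n) → f.coeff n = 0

/-- On the residue classes `P`, `Δ` acts on lowest terms like `g σ^(1-e) d/dσ`: if the lowest
`P`-coefficient of `f` sits at `m`, then `Δ f` has no `P`-coefficient below `m - e`, and `m g f_m`
at `m - e`. -/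
def LowersOrderOn {R : Type*} [Ring R] (Δ : LaurentSeries R → LaurentSeries R) (e : ℤ) (g : R)
    (P : ℤ → Prop) : Prop :=
  ∀ f m, (∀ j, P j → j < m → f.coeff j = 0) → ∀ n, P n → n ≤ m - e →
    (Δ f).coeff n = if n = m - e then m * g * f.coeff m else 0

section Derivation

variable {L : Type*} [Field L] [CharZero L]

theorem lowersOrderOn_of_coeff_eq_finsum {e : ℤ} (he : 0 < e)
    {D : Derivation ℚ (LaurentSeries L) (LaurentSeries L)} {G : LaurentSeries L}
    (hD : ∀ a, IsPowerSeriesInPow e (D (C a))) (hG : IsPowerSeriesInPow e G)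
    (hDG : ∀ f n, (D f).coeff n = ∑ᶠ i : ℤ,
      ((D (C (f.coeff i))).coeff (n - i) + i * f.coeff i * G.coeff (n - i + e)))
    {P : ℤ → Prop} (hP : ∀ i j, e ∣ i - j → P i → P j) :
    LowersOrderOn D e (G.coeff 0) P := by
  intro f m hf n hn hnm
  rw [hDG, finsum_eq_single _ (n + e) fun i hi => ?_]
  · rw [show n - (n + e) = -e by ring, neg_add_cancel, hD _ _ (Or.inl (by omega)), zero_add]
    split_ifs with h
    · rw [h, sub_add_cancel]
      ring
    · rw [hf _ (hP n _ ⟨-1, by ring⟩ hn) (by omega)]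
      ring
  · by_cases hfi : f.coeff i = 0
    · simp [hfi]
    by_cases hdvd : e ∣ n - i
    · have him : m ≤ i := not_lt.1 (mt (hf i (hP n i hdvd hn)) hfi)
      rw [hD _ _ (Or.inl (by omega)), hG _ (Or.inl (by omega))]
      ring
    · rw [hD _ _ (Or.inr hdvd), hG _ (Or.inr fun h => hdvd ((dvd_add_left dvd_rfl).1 h))]
      ring

theorem coeff_eq_finsum_of_termwise {e : ℕ} (he : 0 < e)
    {D : Derivation ℚ (LaurentSeries L) (LaurentSeries L)}
    (hD : ∀ f : LaurentSeries L, ∀ n : ℤ, (D f).coeff n = ∑ᶠ i : ℤ,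
      (D (C (f.coeff i)) * single (1 : ℤ) 1 ^ i
        + (i : LaurentSeries L) * C (f.coeff i) * single (1 : ℤ) 1 ^ (i - 1)
          * D (single (1 : ℤ) 1)).coeff n)
    (f : LaurentSeries L) (n : ℤ) :
    (D f).coeff n = ∑ᶠ i : ℤ, ((D (C (f.coeff i))).coeff (n - i)
      + i * f.coeff i * (single (1 : ℤ) 1 ^ (e - 1) * D (single (1 : ℤ) 1)).coeff (n - i + e)) := by
  rw [hD]
  refine finsum_congr fun i => ?_
  have hpow : (single (1 : ℤ) (1 : L)) ^ (i - 1) =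
      single (i - e) 1 * single (1 : ℤ) 1 ^ (e - 1) := by
    rw [← RatFunc.single_zpow, ← RatFunc.single_one_eq_pow, single_mul_single, one_mul,
      show i - e + ((e - 1 : ℕ) : ℤ) = i - 1 by omega]
  rw [coeff_add, ← RatFunc.single_zpow, coeff_mul_single, mul_one, hpow,
    show (i : LaurentSeries L) * C (f.coeff i) * (single (i - e) 1 * single (1 : ℤ) 1 ^ (e - 1))
        * D (single (1 : ℤ) 1)
      = C ((i : L) * f.coeff i) * (single (i - e) 1 * (single (1 : ℤ) 1 ^ (e - 1)
        * D (single (1 : ℤ) 1))) by rw [map_mul, map_intCast]; ring,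
    C_mul_eq_smul, coeff_smul, coeff_single_mul, one_mul, smul_eq_mul,
    show n - (i - e) = n - i + e by ring]

theorem lowersOrderOn_of_termwise {e : ℕ} (he : 0 < e) {γ c₁ c₂ c₃ : L}
    {D : Derivation ℚ (LaurentSeries L) (LaurentSeries L)}
    (hD₁ : ∀ a, IsPowerSeriesInPow e (D (C a)))
    (hD₂ : single (1 : ℤ) 1 ^ (e - 1) * D (single (1 : ℤ) 1) =
      C (e : L)⁻¹ * (C γ + C c₁ * single (1 : ℤ) 1 ^ e + C c₂ * single (1 : ℤ) 1 ^ (2 * e)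
        + C c₃ * single (1 : ℤ) 1 ^ (3 * e)))
    (hD₃ : ∀ f : LaurentSeries L, ∀ n : ℤ, (D f).coeff n = ∑ᶠ i : ℤ,
      (D (C (f.coeff i)) * single (1 : ℤ) 1 ^ i
        + (i : LaurentSeries L) * C (f.coeff i) * single (1 : ℤ) 1 ^ (i - 1)
          * D (single (1 : ℤ) 1)).coeff n)
    {P : ℤ → Prop} (hP : ∀ i j, (e : ℤ) ∣ i - j → P i → P j) :
    LowersOrderOn D e ((e : L)⁻¹ * γ) P := by
  have hG₀ : (single (1 : ℤ) 1 ^ (e - 1) * D (single (1 : ℤ) 1)).coeff 0 = (e : L)⁻¹ * γ := by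
    rw [hD₂, C_mul_eq_smul, coeff_smul, smul_eq_mul]
    simp [single_pow, he.ne', show (0 : ℤ) ≠ e by omega]
  rw [← hG₀]
  refine lowersOrderOn_of_coeff_eq_finsum (by exact_mod_cast he) hD₁ (fun n hn => ?_)
    (coeff_eq_finsum_of_termwise he hD₃) hP
  have hn' : n ≠ 0 ∧ n ≠ e ∧ n ≠ 2 * e ∧ n ≠ 3 * e := by
    rcases hn with hn | hn
    · omega
    · refine ⟨?_, ?_, ?_, ?_⟩ <;> rintro rfl <;> simp at hn
  rw [hD₂, C_mul_eq_smul, coeff_smul, smul_eq_mul]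
  simp [single_pow, hn']

end Derivation

section Equation

theorem coeff_two_mul_pow_three_add {R : Type*} [Semiring R] {z : LaurentSeries R} {t α : R}
    {n : ℤ} (hn : n ≠ 0) (hzn : z.coeff n = 0) :
    (2 * z ^ 3 + C t * z + C α).coeff n = 2 * (z ^ 3).coeff n := by
  simp [C_apply, hn, hzn, two_mul]

variable {L : Type*} [Field L] [CharZero L] {Δ : LaurentSeries L → LaurentSeries L} {e : ℤ}
  {g t α : L} {z : LaurentSeries L}

theorem coeff_eq_zero_of_lt_neg (he : 0 ≤ e) (hΔ : LowersOrderOn Δ e g fun _ => True)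
    (hz : Δ (Δ z) = 2 * z ^ 3 + C t * z + C α) {j : ℤ} (hj : j < -e) : z.coeff j = 0 := by
  by_contra hzj
  have hz0 : z ≠ 0 := by
    rintro rfl
    exact hzj rfl
  have hN : z.order < -e := (order_le_of_coeff_ne_zero hzj).trans_lt hj
  have hbelow : ∀ i, True → i < z.order → z.coeff i = 0 := fun i _ => coeff_eq_zero_of_lt_order
  have hDz : ∀ i, True → i < z.order - e → (Δ z).coeff i = 0 := fun i _ hi => by
    rw [hΔ z _ hbelow i trivial hi.le, if_neg hi.ne]
  have key := hΔ _ _ hDz (3 * z.order) trivial (by omega)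
  rw [if_neg (by omega), hz, coeff_two_mul_pow_three_add (by omega) (hbelow _ trivial (by omega)),
    coeff_pow_three_mul fun i => hbelow i trivial] at key
  exact hz0 (coeff_order_eq_zero.1 (by simpa using key))

theorem sq_mul_coeff_neg_eq_pow_three (he : 0 < e) (hΔ : LowersOrderOn Δ e g fun _ => True)
    (hz : Δ (Δ z) = 2 * z ^ 3 + C t * z + C α) (hbelow : ∀ j < -e, z.coeff j = 0) :
    (e * g) ^ 2 * z.coeff (-e) = z.coeff (-e) ^ 3 := by
  have hDz := hΔ z (-e) fun j _ => hbelow j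
  have hDz' : ∀ j, True → j < -e - e → (Δ z).coeff j = 0 := fun j _ hj => by
    rw [hDz j trivial hj.le, if_neg hj.ne]
  have key := hΔ _ _ hDz' (-e - e - e) trivial le_rfl
  rw [if_pos rfl, hDz _ trivial le_rfl, if_pos rfl, hz,
    coeff_two_mul_pow_three_add (by omega) (hbelow _ (by omega)), show -e - e - e = 3 * -e by ring,
    coeff_pow_three_mul hbelow] at key
  push_cast at key
  linear_combination -key / 2

/-- `(m - e) m g² = 6a²` is the indicial equation of `D² z = 2z³` at a pole `a σ^(-e)`; for
`a ≠ 0` its roots `-2e`, `3e` are the resonances `-1`, `4` of Painlevé II, rescaled. -/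
theorem dvd_of_indicial_eq {m : ℤ} {a : L} (hg : g ≠ 0) (hlead : (e * g) ^ 2 * a = a ^ 3)
    (h : (((m - e) * m : ℤ) : L) * g ^ 2 = 6 * a ^ 2) : e ∣ m := by
  have hL : ((m * (m - e) * (m - 3 * e) * (m + 2 * e) : ℤ) : L) * g ^ 4 = 0 := by
    push_cast at h ⊢
    linear_combination ((m - e) * m * g ^ 2 + 6 * a ^ 2 - 6 * e ^ 2 * g ^ 2) * h - 36 * a * hlead
  have hZ : m * (m - e) * (m - 3 * e) * (m + 2 * e) = 0 := by
    exact_mod_cast (mul_eq_zero.1 hL).resolve_right (pow_ne_zero 4 hg)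
  simp only [mul_eq_zero] at hZ
  rcases hZ with ((h | h) | h) | h
  · exact ⟨0, by omega⟩
  · exact ⟨1, by omega⟩
  · exact ⟨3, by omega⟩
  · exact ⟨-2, by omega⟩

theorem coeff_eq_zero_of_not_dvd (he : 0 < e) (hg : g ≠ 0)
    (hΔ : LowersOrderOn Δ e g fun j => ¬ e ∣ j) (hz : Δ (Δ z) = 2 * z ^ 3 + C t * z + C α)
    (hbelow : ∀ j < -e, z.coeff j = 0) (hlead : (e * g) ^ 2 * z.coeff (-e) = z.coeff (-e) ^ 3)
    {n : ℤ} (hn : ¬ e ∣ n) : z.coeff n = 0 := by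
  by_contra hzn
  obtain ⟨m, ⟨hm, hzm⟩, hmin⟩ := Int.exists_least_of_bdd (P := fun k => ¬ e ∣ k ∧ z.coeff k ≠ 0)
    ⟨-e, fun k hk => not_lt.1 (mt (hbelow k) hk.2)⟩ ⟨n, hn, hzn⟩
  have hoff : ∀ j, ¬ e ∣ j → j < m → z.coeff j = 0 := fun j hj hjm =>
    not_not.1 fun h => (hmin j ⟨hj, h⟩).not_gt hjm
  have hlt : -e < m := (not_lt.1 (mt (hbelow m) hzm)).lt_of_ne (by
    rintro rfl
    exact hm (dvd_neg.2 dvd_rfl))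
  have hm1 : ¬ e ∣ m - e := (dvd_sub_self_right).not.2 hm
  have hm2 : ¬ e ∣ m - e - e := (dvd_sub_self_right).not.2 hm1
  have hDz := hΔ z m hoff
  have hDz' : ∀ j, ¬ e ∣ j → j < m - e → (Δ z).coeff j = 0 := fun j hj hjm => by
    rw [hDz j hj hjm.le, if_neg hjm.ne]
  have key := hΔ _ _ hDz' (m - e - e) hm2 le_rfl
  rw [if_pos rfl, hDz _ hm1 le_rfl, if_pos rfl, hz,
    coeff_two_mul_pow_three_add (fun h => hm2 (by rw [h]; exact dvd_zero e))
      (hoff _ hm2 (by omega)),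
    show m - e - e = m - 2 * e by ring, coeff_pow_three_of_not_dvd hbelow hoff hm hlt] at key
  refine hm (dvd_of_indicial_eq hg hlead (mul_right_cancel₀ hzm ?_))
  push_cast at key ⊢
  linear_combination -key

end Equation

end LaurentSeries

theorem statement_2_general
    (L : Type*) [Field L] [CharZero L]
    (e : ℕ) (he : 0 < e)
    (γ t α : L) (hγ : γ ≠ 0)
    (σ : LaurentSeries L) (hσ : σ = HahnSeries.single (1 : ℤ) 1)
    (D : Derivation ℚ (LaurentSeries L) (LaurentSeries L))
    -- (i): for every `a ∈ L`, the coefficient of `D(a)` at every index that is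
    -- negative or not divisible by `e` is zero
    (hD₁ : ∀ a : L, ∀ n : ℤ, (n < 0 ∨ ¬ (e : ℤ) ∣ n) → (D (HahnSeries.C a)).coeff n = 0)
    -- (ii): `σ^(e−1)·D(σ) = (1/e)·(γ + c₁σ^e + c₂σ^(2e) + c₃σ^(3e))` for some `c₁ c₂ c₃ ∈ L`
    (hD₂ : ∃ c₁ c₂ c₃ : L,
      σ ^ (e - 1) * D σ =
        HahnSeries.C ((e : L)⁻¹) *
          (HahnSeries.C γ + HahnSeries.C c₁ * σ ^ e + HahnSeries.C c₂ * σ ^ (2 * e)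
            + HahnSeries.C c₃ * σ ^ (3 * e)))
    -- (iii): `D` acts termwise
    (hD₃ : ∀ f : LaurentSeries L, ∀ n : ℤ,
      (D f).coeff n = ∑ᶠ i : ℤ,
        (D (HahnSeries.C (f.coeff i)) * σ ^ i
          + (i : LaurentSeries L) * HahnSeries.C (f.coeff i) * σ ^ (i - 1) * D σ).coeff n)
    (z : LaurentSeries L)
    (hz : D (D z) = 2 * z ^ 3 + HahnSeries.C t * z + HahnSeries.C α) :
    ∀ n : ℤ, ¬ (e : ℤ) ∣ n → z.coeff n = 0 := by
  subst hσ
  obtain ⟨c₁, c₂, c₃, hG⟩ := hD₂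
  have hlow : ∀ P : ℤ → Prop, (∀ i j, (e : ℤ) ∣ i - j → P i → P j) →
      LaurentSeries.LowersOrderOn D e ((e : L)⁻¹ * γ) P :=
    fun P hP => LaurentSeries.lowersOrderOn_of_termwise he hD₁ hG hD₃ hP
  have he' : (0 : ℤ) < e := by exact_mod_cast he
  have hlow_all := hlow (fun _ => True) fun _ _ _ _ => trivial
  have hbelow : ∀ j < -(e : ℤ), z.coeff j = 0 :=
    fun j hj => LaurentSeries.coeff_eq_zero_of_lt_neg he'.le hlow_all hz hj
  have hlead := LaurentSeries.sq_mul_coeff_neg_eq_pow_three he' hlow_all hz hbelow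
  have hlow_off := hlow (fun j => ¬ (e : ℤ) ∣ j)
    fun i j hij hi hj => hi (by simpa using dvd_add hij hj)
  have hg : (e : L)⁻¹ * γ ≠ 0 := mul_ne_zero (inv_ne_zero (by exact_mod_cast he.ne')) hγ
  exact fun n hn => LaurentSeries.coeff_eq_zero_of_not_dvd he' hg hlow_off hz hbelow hlead hn

/-- Suppose `e > 1` and `z ∈ L((σ))` satisfies `D(D(z)) = 2z³ + t·z + α`.
Then every coefficient of `z` at an index not divisible by `e` is zero. -/
theorem statement_2
    (L : Type*) [Field L] [CharZero L]
    (e : ℕ) (he : 0 < e)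
    (γ t α : L) (hγ : γ ≠ 0)
    (σ : LaurentSeries L) (hσ : σ = HahnSeries.single (1 : ℤ) 1)
    (D : Derivation ℚ (LaurentSeries L) (LaurentSeries L))
    -- (i): for every `a ∈ L`, the coefficient of `D(a)` at every index that is
    -- negative or not divisible by `e` is zero
    (hD₁ : ∀ a : L, ∀ n : ℤ, (n < 0 ∨ ¬ (e : ℤ) ∣ n) → (D (HahnSeries.C a)).coeff n = 0)
    -- (ii): `σ^(e−1)·D(σ) = (1/e)·(γ + c₁σ^e + c₂σ^(2e) + c₃σ^(3e))` for some `c₁ c₂ c₃ ∈ L`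
    (hD₂ : ∃ c₁ c₂ c₃ : L,
      σ ^ (e - 1) * D σ =
        HahnSeries.C ((e : L)⁻¹) *
          (HahnSeries.C γ + HahnSeries.C c₁ * σ ^ e + HahnSeries.C c₂ * σ ^ (2 * e)
            + HahnSeries.C c₃ * σ ^ (3 * e)))
    -- (iii): `D` acts termwise
    (hD₃ : ∀ f : LaurentSeries L, ∀ n : ℤ,
      (D f).coeff n = ∑ᶠ i : ℤ,
        (D (HahnSeries.C (f.coeff i)) * σ ^ i
          + (i : LaurentSeries L) * HahnSeries.C (f.coeff i) * σ ^ (i - 1) * D σ).coeff n)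
    (he₁ : 1 < e)
    (z : LaurentSeries L)
    (hz : D (D z) = 2 * z ^ 3 + HahnSeries.C t * z + HahnSeries.C α) :
    ∀ n : ℤ, ¬ (e : ℤ) ∣ n → z.coeff n = 0 :=
  statement_2_general L e he γ t α hγ σ hσ D hD₁ hD₂ hD₃ z hz
end

section
/- Suppose e > 1 and z ∈ L((σ)) is nonzero, satisfies D(D(z)) = 2z³ + t·z + α, and has a nonzero coefficient at some index not divisible by e. Then the order of z is negative. -/
namespace HahnSeries

theorem exists_coeff_ne_zero_minimal {Γ R : Type*} [PartialOrder Γ] [Zero R]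
    {x : HahnSeries Γ R} {p : Γ → Prop} (h : ∃ n, p n ∧ x.coeff n ≠ 0) :
    ∃ m, p m ∧ x.coeff m ≠ 0 ∧ ∀ i < m, p i → x.coeff i = 0 := by
  have hwf : {n | p n ∧ x.coeff n ≠ 0}.IsWF := x.isWF_support.mono fun _ hn => hn.2
  obtain ⟨hpm, hxm⟩ := hwf.min_mem h
  exact ⟨_, hpm, hxm, fun i hi hpi => by_contra fun hxi => hwf.not_lt_min h ⟨hpi, hxi⟩ hi⟩

variable {Γ R : Type*} [AddCommMonoid Γ] [PartialOrder Γ] [IsOrderedCancelAddMonoid Γ]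
  [CommRing R]

variable (R) in
def supportedIn (S : AddSubmonoid Γ) : Subalgebra R (HahnSeries Γ R) where
  carrier := {x | x.support ⊆ S}
  mul_mem' {x y} hx hy := by
    intro c hc
    obtain ⟨a, ha, b, hb, rfl⟩ := support_mul_subset hc
    exact S.add_mem (hx ha) (hy hb)
  add_mem' hx hy := (support_add_subset _ _).trans (Set.union_subset hx hy)
  algebraMap_mem' r := by
    rw [← C_eq_algebraMap, C_apply]
    exact support_single_subset.trans (Set.singleton_subset_iff.2 S.zero_mem)

theorem C_mem_supportedIn (S : AddSubmonoid Γ) (r : R) : C r ∈ supportedIn R S := by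
  rw [C_eq_algebraMap]
  exact Subalgebra.algebraMap_mem _ r

theorem mem_supportedIn {S : AddSubmonoid Γ} {x : HahnSeries Γ R} :
    x ∈ supportedIn R S ↔ x.support ⊆ S := Iff.rfl

theorem coeff_eq_zero_of_mem_supportedIn {S : AddSubmonoid Γ} {x : HahnSeries Γ R}
    (hx : x ∈ supportedIn R S) {a : Γ} (ha : a ∉ S) : x.coeff a = 0 :=
  Function.notMem_support.1 fun h => ha (hx h)

end HahnSeries

open HahnSeries

theorem Int.mem_multiples_natCast_iff {e : ℕ} {j : ℤ} :
    j ∈ AddSubmonoid.multiples (e : ℤ) ↔ 0 ≤ j ∧ (e : ℤ) ∣ j := by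
  rw [AddSubmonoid.mem_multiples_iff]
  constructor
  · rintro ⟨n, rfl⟩
    exact ⟨by positivity, ⟨n, by rw [nsmul_eq_mul, mul_comm]⟩⟩
  · rintro ⟨hj, k, rfl⟩
    refine ⟨k.toNat, ?_⟩
    rcases le_or_gt 0 k with hk | hk
    · rw [nsmul_eq_mul, Int.toNat_of_nonneg hk, mul_comm]
    · have : (e : ℤ) = 0 := by nlinarith
      simp [this]

def Int.nonnegDvdOrGe (e m : ℤ) : AddSubmonoid ℤ where
  carrier := {x | 0 ≤ x ∧ (e ∣ x ∨ m ≤ x)}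
  zero_mem' := ⟨le_rfl, .inl (dvd_zero e)⟩
  add_mem' := by
    rintro a b ⟨ha, hea | hma⟩ ⟨hb, heb | hmb⟩
    all_goals refine ⟨by omega, ?_⟩
    exacts [.inl (dvd_add hea heb), .inr (by omega), .inr (by omega), .inr (by omega)]

section Lowering

variable {L : Type*} [Field L] {e : ℕ}

def VanishesBelowInClass (e : ℕ) (f : LaurentSeries L) (n : ℤ) : Prop :=
  ∀ i < n, (e : ℤ) ∣ n - i → f.coeff i = 0

def LowersOrderBy (e : ℕ) (γ : L) (D : LaurentSeries L → LaurentSeries L) : Prop :=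
  ∀ f n, VanishesBelowInClass e f (n + e) →
    (D f).coeff n = ((n + e : ℤ) : L) * (e : L)⁻¹ * γ * f.coeff (n + e)

variable {γ : L} {D : LaurentSeries L → LaurentSeries L}

theorem LowersOrderBy.vanishesBelowInClass_apply (hD : LowersOrderBy e γ D)
    {f : LaurentSeries L} {n : ℤ} (hf : VanishesBelowInClass e f (n + e)) :
    VanishesBelowInClass e (D f) n := by
  intro i hi hdvd
  have hfi : VanishesBelowInClass e f (i + e) := fun j hj hdj =>
    hf j (by omega) (by rw [show n + e - j = n - i + (i + e - j) by ring]; exact dvd_add hdvd hdj)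
  rw [hD f i hfi, hf (i + e) (by omega) (by rwa [add_sub_add_right_eq_sub]), mul_zero]

theorem LowersOrderBy.coeff_apply_apply (hD : LowersOrderBy e γ D) {f : LaurentSeries L}
    {m : ℤ} (hf : VanishesBelowInClass e f m) :
    (D (D f)).coeff (m - 2 * e) =
      ((m - e : ℤ) : L) * (m : L) * ((e : L)⁻¹ * γ) ^ 2 * f.coeff m := by
  have hf' : VanishesBelowInClass e f (m - e + e) := by rwa [sub_add_cancel]
  have hDf : VanishesBelowInClass e (D f) (m - 2 * e + e) := by
    rw [show m - 2 * e + e = m - e by ring]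
    exact hD.vanishesBelowInClass_apply hf'
  rw [hD _ _ hDf, show m - 2 * e + e = m - e by ring, hD f _ hf', sub_add_cancel]
  ring

end Lowering

section Derivation

open AddSubmonoid

variable {L : Type*} [Field L] {e : ℕ}

theorem coeff_single_zpow_mul_of_pow_mul_eq (he : 0 < e) {a : L} {δ P : LaurentSeries L}
    (hδ : single (1 : ℤ) (1 : L) ^ (e - 1) * δ = C a * P) (i n : ℤ) :
    (single (1 : ℤ) (1 : L) ^ (i - 1) * δ).coeff n = a * P.coeff (n + e - i) := by
  have hsplit : single (1 : ℤ) (1 : L) ^ (i - 1) = single (i - e) 1 * single 1 1 ^ (e - 1) := by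
    rw [← RatFunc.single_zpow, single_pow, one_pow, single_mul_single, one_mul, nsmul_one]
    congr
    omega
  rw [hsplit, mul_assoc, hδ, C_apply, ← mul_assoc, single_mul_single, coeff_single_mul,
    add_zero, one_mul]
  ring_nf

theorem mem_supportedIn_multiples_iff {f : LaurentSeries L} :
    f ∈ supportedIn L (multiples (e : ℤ)) ↔ ∀ n, (n < 0 ∨ ¬ (e : ℤ) ∣ n) → f.coeff n = 0 := by
  simp only [mem_supportedIn, Set.subset_def, SetLike.mem_coe, Int.mem_multiples_natCast_iff]
  refine forall_congr' fun n => ?_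
  rw [← not_imp_not, not_and_or, not_le, HahnSeries.mem_support, not_not]

noncomputable def cubicInPow (e : ℕ) (c₀ c₁ c₂ c₃ : L) : LaurentSeries L :=
  C c₀ + C c₁ * single (1 : ℤ) (1 : L) ^ e + C c₂ * single 1 1 ^ (2 * e)
    + C c₃ * single 1 1 ^ (3 * e)

theorem cubicInPow_mem_supportedIn_multiples (c₀ c₁ c₂ c₃ : L) :
    cubicInPow e c₀ c₁ c₂ c₃ ∈ supportedIn L (multiples (e : ℤ)) := by
  have hC := C_mem_supportedIn (R := L) (multiples (e : ℤ))
  have hσe : single (1 : ℤ) (1 : L) ^ e ∈ supportedIn L (multiples (e : ℤ)) := by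
    rw [single_pow, mem_supportedIn]
    exact support_single_subset.trans (Set.singleton_subset_iff.2 ⟨1, by simp⟩)
  rw [cubicInPow, pow_mul', pow_mul']
  exact add_mem (add_mem (add_mem (hC _) (mul_mem (hC _) hσe))
    (mul_mem (hC _) (pow_mem hσe _))) (mul_mem (hC _) (pow_mem hσe _))

theorem coeff_cubicInPow_eq_zero (c₀ c₁ c₂ c₃ : L) {n : ℤ} (hn : n < 0 ∨ ¬ (e : ℤ) ∣ n) :
    (cubicInPow e c₀ c₁ c₂ c₃).coeff n = 0 :=
  mem_supportedIn_multiples_iff.1 (cubicInPow_mem_supportedIn_multiples c₀ c₁ c₂ c₃) n hn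

theorem coeff_zero_cubicInPow (he : 0 < e) (c₀ c₁ c₂ c₃ : L) :
    (cubicInPow e c₀ c₁ c₂ c₃).coeff 0 = c₀ := by
  simp [cubicInPow, single_pow, C_apply, single_mul_single, he.ne', eq_comm (a := (0 : ℤ))]

theorem lowersOrderBy_of_coeff_eq_finsum [CharZero L] (he : 0 < e) {γ : L} {P : LaurentSeries L}
    {D : Derivation ℚ (LaurentSeries L) (LaurentSeries L)}
    (hD₁ : ∀ a : L, ∀ n : ℤ, (n < 0 ∨ ¬ (e : ℤ) ∣ n) → (D (C a)).coeff n = 0)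
    (hP : ∀ n : ℤ, (n < 0 ∨ ¬ (e : ℤ) ∣ n) → P.coeff n = 0) (hP₀ : P.coeff 0 = γ)
    (hDσ : single (1 : ℤ) (1 : L) ^ (e - 1) * D (single 1 1) = C (e : L)⁻¹ * P)
    (hD₃ : ∀ f : LaurentSeries L, ∀ n : ℤ,
      (D f).coeff n = ∑ᶠ i : ℤ,
        (D (C (f.coeff i)) * single 1 1 ^ i
          + (i : LaurentSeries L) * C (f.coeff i) * single 1 1 ^ (i - 1)
            * D (single 1 1)).coeff n) :
    LowersOrderBy e γ D := by
  have summand (s : L) (i n : ℤ) :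
      (D (C s) * single 1 1 ^ i
        + (i : LaurentSeries L) * C s * single 1 1 ^ (i - 1) * D (single 1 1)).coeff n
        = (D (C s)).coeff (n - i) + i * s * (e : L)⁻¹ * P.coeff (n + e - i) := by
    rw [coeff_add, ← RatFunc.single_zpow, coeff_mul_single, mul_one, mul_assoc,
      ← map_intCast C, ← map_mul, C_mul_eq_smul, coeff_smul, smul_eq_mul,
      coeff_single_zpow_mul_of_pow_mul_eq he hDσ]
    ring
  intro f n hf
  rw [hD₃, finsum_eq_single _ (n + e), summand, hD₁ _ _ (.inl (by omega)), sub_self,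
    zero_add, hP₀]
  · ring
  intro i hi
  rw [summand]
  by_cases hdvd : (e : ℤ) ∣ n + e - i
  · rcases lt_or_gt_of_ne hi with hlt | hgt
    · simp [hf i hlt hdvd]
    · rw [hD₁ _ _ (.inl (by omega)), hP _ (.inl (by omega)), mul_zero, add_zero]
  · have hdvd' : ¬ (e : ℤ) ∣ n - i := by
      rwa [show n + e - i = n - i + e by ring, dvd_add_self_right] at hdvd
    rw [hD₁ _ _ (.inr hdvd'), hP _ (.inr hdvd), mul_zero, add_zero]

end Derivation

theorem statement_3_general
    (L : Type*) [Field L] [CharZero L]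
    (e : ℕ) (he : 0 < e)
    (γ t α : L) (hγ : γ ≠ 0)
    (σ : LaurentSeries L) (hσ : σ = HahnSeries.single (1 : ℤ) 1)
    (D : Derivation ℚ (LaurentSeries L) (LaurentSeries L))
    (hD₁ : ∀ a : L, ∀ n : ℤ, (n < 0 ∨ ¬ (e : ℤ) ∣ n) → (D (HahnSeries.C a)).coeff n = 0)
    (hD₂ : ∃ c₁ c₂ c₃ : L,
      σ ^ (e - 1) * D σ =
        HahnSeries.C ((e : L)⁻¹) *
          (HahnSeries.C γ + HahnSeries.C c₁ * σ ^ e + HahnSeries.C c₂ * σ ^ (2 * e)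
            + HahnSeries.C c₃ * σ ^ (3 * e)))
    (hD₃ : ∀ f : LaurentSeries L, ∀ n : ℤ,
      (D f).coeff n = ∑ᶠ i : ℤ,
        (D (HahnSeries.C (f.coeff i)) * σ ^ i
          + (i : LaurentSeries L) * HahnSeries.C (f.coeff i) * σ ^ (i - 1) * D σ).coeff n)
    (z : LaurentSeries L)
    (hz : D (D z) = 2 * z ^ 3 + HahnSeries.C t * z + HahnSeries.C α)
    (hn : ∃ n : ℤ, ¬ (e : ℤ) ∣ n ∧ z.coeff n ≠ 0) :
    z.order < 0 := by
  obtain ⟨c₁, c₂, c₃, hDσ⟩ := hD₂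
  subst hσ
  have hlow : LowersOrderBy e γ D :=
    lowersOrderBy_of_coeff_eq_finsum he hD₁ (fun _ => coeff_cubicInPow_eq_zero γ c₁ c₂ c₃)
      (coeff_zero_cubicInPow he γ c₁ c₂ c₃) hDσ hD₃
  by_contra! hord
  obtain ⟨m, hm, hzm, hmin⟩ := z.exists_coeff_ne_zero_minimal hn
  have hV : VanishesBelowInClass e z m := fun i hi hdvd =>
    hmin i hi fun hei => hm (by simpa using dvd_add hdvd hei)
  have hzS : z ∈ supportedIn L (Int.nonnegDvdOrGe e m) := fun i hi =>
    ⟨not_lt.1 fun hneg => hi (coeff_eq_zero_of_lt_order (hneg.trans_le hord)),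
      or_iff_not_imp_left.2 fun hei => not_lt.1 fun hlt => hi (hmin i hlt hei)⟩
  have hRHS : 2 * z ^ 3 + C t * z + C α ∈ supportedIn L (Int.nonnegDvdOrGe e m) := by
    rw [two_mul]
    exact add_mem (add_mem (add_mem (pow_mem hzS 3) (pow_mem hzS 3))
      (mul_mem (C_mem_supportedIn _ t) hzS)) (C_mem_supportedIn _ α)
  have hout : m - 2 * e ∉ Int.nonnegDvdOrGe e m := fun ⟨_, h⟩ =>
    h.elim (fun h => hm (by simpa using dvd_add h (dvd_mul_left (e : ℤ) 2))) (by omega)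
  have key := hlow.coeff_apply_apply hV
  rw [hz, coeff_eq_zero_of_mem_supportedIn hRHS hout] at key
  refine mul_ne_zero (mul_ne_zero (mul_ne_zero ?_ ?_) ?_) hzm key.symm
  · exact Int.cast_ne_zero.2 (sub_ne_zero.2 fun h => hm (h ▸ dvd_rfl))
  · exact Int.cast_ne_zero.2 fun h => hm (h ▸ dvd_zero _)
  · exact pow_ne_zero _ (mul_ne_zero (inv_ne_zero (Nat.cast_ne_zero.2 he.ne')) hγ)

/-- Suppose `e > 1` and `z ∈ L((σ))` is nonzero, satisfies
`D(D(z)) = 2z³ + t·z + α`, and has a nonzero coefficient at some index not divisible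
by `e`. Then the order of `z` is negative. -/
theorem statement_3
    (L : Type*) [Field L] [CharZero L]
    (e : ℕ) (he : 0 < e)
    (γ t α : L) (hγ : γ ≠ 0)
    (σ : LaurentSeries L) (hσ : σ = HahnSeries.single (1 : ℤ) 1)
    (D : Derivation ℚ (LaurentSeries L) (LaurentSeries L))
    (hD₁ : ∀ a : L, ∀ n : ℤ, (n < 0 ∨ ¬ (e : ℤ) ∣ n) → (D (HahnSeries.C a)).coeff n = 0)
    (hD₂ : ∃ c₁ c₂ c₃ : L,
      σ ^ (e - 1) * D σ =
        HahnSeries.C ((e : L)⁻¹) *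
          (HahnSeries.C γ + HahnSeries.C c₁ * σ ^ e + HahnSeries.C c₂ * σ ^ (2 * e)
            + HahnSeries.C c₃ * σ ^ (3 * e)))
    (hD₃ : ∀ f : LaurentSeries L, ∀ n : ℤ,
      (D f).coeff n = ∑ᶠ i : ℤ,
        (D (HahnSeries.C (f.coeff i)) * σ ^ i
          + (i : LaurentSeries L) * HahnSeries.C (f.coeff i) * σ ^ (i - 1) * D σ).coeff n)
    (he₁ : 1 < e)
    (z : LaurentSeries L) (hz₀ : z ≠ 0)
    (hz : D (D z) = 2 * z ^ 3 + HahnSeries.C t * z + HahnSeries.C α)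
    (hn : ∃ n : ℤ, ¬ (e : ℤ) ∣ n ∧ z.coeff n ≠ 0) :
    z.order < 0 :=
  statement_3_general L e he γ t α hγ σ hσ D hD₁ hD₂ hD₃ z hz hn
end

section
/- Suppose e > 1. Then there is no nonzero z ∈ L((σ)) of negative order which satisfies D(D(z)) = 2z³ + t·z + α and has a nonzero coefficient at some index not divisible by e. -/
/-!
On each residue class of exponents modulo `e`, `D` acts to leading order like
`κ σ^(1 - e) d/dσ` with `κ = γ / e`: it lowers exponents by `e` and multiplies the coefficient
of `σ^j` by `j κ`. Comparing lowest coefficients in `D²z = 2z³ + tz + α` forces `ord z = -e`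
and `a² = (e κ)²` for the leading coefficient `a`. If `k` is the least exponent with `e ∤ k` and
`z_k ≠ 0`, the coefficient at `k - 2e` reads `k (k - e) κ² z_k = 6 a² z_k`, since the only
contribution to `z³` there is `3 (a σ^(-e))² z_k σ^k`. Hence `(k - 3e)(k + 2e) = 0`,
contradicting `e ∤ k`.
-/

open HahnSeries

namespace HahnSeries

variable {Γ R : Type*}

theorem order_eq_of_coeff_ne_zero_of_forall_lt [Zero Γ] [LinearOrder Γ] [Zero R]
    {x : HahnSeries Γ R} {i : Γ} (hi : x.coeff i ≠ 0) (hlt : ∀ j < i, x.coeff j = 0) :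
    x.order = i :=
  le_antisymm (order_le_of_coeff_ne_zero hi)
    ((le_order_iff_forall (ne_zero_of_coeff_ne_zero hi)).2 hlt)

section Semiring

variable [AddCommMonoid Γ] [PartialOrder Γ] [IsOrderedCancelAddMonoid Γ] [Semiring R]

theorem support_pow_subset_of_subset {S : AddSubmonoid Γ} {x : HahnSeries Γ R}
    (hx : x.support ⊆ S) : ∀ n : ℕ, (x ^ n).support ⊆ S
  | 0 => by
    rw [pow_zero]
    exact support_single_subset.trans (Set.singleton_subset_iff.2 S.zero_mem)
  | n + 1 => by
    rw [pow_succ]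
    exact support_mul_subset.trans <| Set.add_subset_iff.2 fun _ ha _ hb =>
      S.add_mem (support_pow_subset_of_subset hx n ha) (hx hb)

end Semiring

theorem leadingCoeff_pow [AddCommMonoid Γ] [LinearOrder Γ] [IsOrderedCancelAddMonoid Γ]
    [Semiring R] [NoZeroDivisors R] (x : HahnSeries Γ R) (n : ℕ) :
    (x ^ n).leadingCoeff = x.leadingCoeff ^ n := by
  induction n with
  | zero => simp
  | succ n ih => rw [pow_succ, leadingCoeff_mul, ih, pow_succ]

theorem coeff_pow_nsmul_order [AddCommMonoid Γ] [LinearOrder Γ] [IsOrderedCancelAddMonoid Γ]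
    [Semiring R] [NoZeroDivisors R] (x : HahnSeries Γ R) (n : ℕ) :
    (x ^ n).coeff (n • x.order) = x.leadingCoeff ^ n := by
  rw [← order_pow, ← leadingCoeff_eq, leadingCoeff_pow]

end HahnSeries

section

variable {L : Type*} [Field L]

/-- To leading order on each residue class of exponents modulo `E`, `T` acts like
`κ σ^(1 - E) d/dσ`. -/
structure LowersOrderLikeDeriv (T : LaurentSeries L → LaurentSeries L) (E : ℤ) (κ : L) :
    Prop where
  coeff_eq_zero {f : LaurentSeries L} {m : ℤ} :
    (∀ i, E ∣ m - i → i ≤ m + E → f.coeff i = 0) → (T f).coeff m = 0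
  coeff_sub {f : LaurentSeries L} {j : ℤ} :
    (∀ i < j, E ∣ j - i → f.coeff i = 0) → (T f).coeff (j - E) = j * f.coeff j * κ

namespace LowersOrderLikeDeriv

variable {T : LaurentSeries L → LaurentSeries L} {E : ℤ} {κ : L}

theorem coeff_comp_eq_zero_of_lt_order (hT : LowersOrderLikeDeriv T E κ) {f : LaurentSeries L}
    {m : ℤ} (h : m + 2 * E < f.order) : (T (T f)).coeff m = 0 :=
  hT.coeff_eq_zero fun _ _ _ => hT.coeff_eq_zero fun _ _ _ => coeff_eq_zero_of_lt_order (by omega)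

theorem coeff_comp_sub_two_mul (hT : LowersOrderLikeDeriv T E κ) {f : LaurentSeries L} {j : ℤ}
    (h : ∀ i < j, E ∣ j - i → f.coeff i = 0) :
    (T (T f)).coeff (j - 2 * E) = j * (j - E) * f.coeff j * κ ^ 2 := by
  have hTf : ∀ i < j - E, E ∣ j - E - i → (T f).coeff i = 0 := fun i hi hdvd =>
    hT.coeff_eq_zero fun k hk hki => h k (by omega) <| by
      rw [show j - k = j - E - i + (i - k) + E by ring]
      exact dvd_add (dvd_add hdvd hk) (dvd_refl E)
  rw [two_mul, ← sub_sub, hT.coeff_sub hTf, hT.coeff_sub h]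
  push_cast
  ring

end LowersOrderLikeDeriv

theorem coeff_pow_three_two_mul_order_add {R : Type*} [CommRing R] [NoZeroDivisors R] {E : ℤ}
    {z : LaurentSeries R} {n : ℤ}
    (hE : E ∣ z.order) (hn : ¬E ∣ n) (hzn : z.coeff n ≠ 0)
    (hmin : ∀ i < n, ¬E ∣ i → z.coeff i = 0) :
    (z ^ 3).coeff (2 * z.order + n) = 3 * z.leadingCoeff ^ 2 * z.coeff n := by
  set N := z.order
  have hNn : N < n := (order_le_of_coeff_ne_zero hzn).lt_of_ne fun h => hn (h ▸ hE)
  set g := truncLT n z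
  set w := z - g
  have hg : g.support ⊆ AddSubgroup.zmultiples E := fun i hi => by
    rw [SetLike.mem_coe, Int.mem_zmultiples_iff]
    by_contra hEi
    rw [mem_support, HahnSeries.coeff_truncLT] at hi
    split_ifs at hi with hin
    exacts [hi (hmin i hin hEi), hi rfl]
  have hgN : g.coeff N = z.leadingCoeff := by
    rw [coeff_truncLT_of_lt hNn, leadingCoeff_eq]
  have hgN0 : g.coeff N ≠ 0 :=
    hgN.trans_ne (leadingCoeff_ne_zero.2 (ne_zero_of_coeff_ne_zero hzn))
  have hg0 : g ≠ 0 := ne_zero_of_coeff_ne_zero hgN0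
  have hgo : g.order = N := order_eq_of_coeff_ne_zero_of_forall_lt hgN0 fun j hj => by
    rw [coeff_truncLT_of_lt (hj.trans hNn)]
    exact coeff_eq_zero_of_lt_order hj
  have hwn : w.coeff n = z.coeff n := by simp [w, g, coeff_truncLT_of_le le_rfl]
  have hw0 : w ≠ 0 := ne_zero_of_coeff_ne_zero (hwn ▸ hzn)
  have hwo : w.order = n := order_eq_of_coeff_ne_zero_of_forall_lt (hwn ▸ hzn)
    fun j hj => by simp [w, g, coeff_truncLT_of_lt hj]
  have hg3 : (g ^ 3).coeff (2 * N + n) = 0 := by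
    by_contra h
    have : 2 * N + n ∈ AddSubgroup.zmultiples E :=
      support_pow_subset_of_subset hg 3 ((mem_support _ _).2 h)
    rw [Int.mem_zmultiples_iff] at this
    exact hn (by simpa using (dvd_add_right (dvd_mul_of_dvd_right hE 2)).1 this)
  have hgw2 : (g * w ^ 2).coeff (2 * N + n) = 0 :=
    coeff_eq_zero_of_lt_order (by simp [order_mul hg0 (pow_ne_zero 2 hw0), hgo, hwo]; omega)
  have hw3 : (w ^ 3).coeff (2 * N + n) = 0 :=
    coeff_eq_zero_of_lt_order (by simp [hwo]; omega)
  have hg2w : (g ^ 2 * w).coeff (2 * N + n) = z.leadingCoeff ^ 2 * z.coeff n := by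
    have := coeff_mul_order_add_order (g ^ 2) w
    rwa [order_pow, hgo, hwo, two_nsmul, ← two_mul, leadingCoeff_pow, leadingCoeff_eq (x := g),
      hgo, hgN, leadingCoeff_eq (x := w), hwo, hwn] at this
  have hz : z ^ 3 = g ^ 3 + (g ^ 2 * w + g ^ 2 * w + g ^ 2 * w)
      + (g * w ^ 2 + g * w ^ 2 + g * w ^ 2) + w ^ 3 := by
    rw [← add_sub_cancel g z]; ring
  simp only [hz, coeff_add, hg3, hgw2, hw3, hg2w]
  ring

theorem coeff_eq_two_mul_coeff_pow_three {y z : LaurentSeries L} {t α : L}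
    (h : y = 2 * z ^ 3 + C t * z + C α) {m : ℤ} (hm : m ≠ 0) (hzm : z.coeff m = 0) :
    y.coeff m = 2 * (z ^ 3).coeff m := by
  simp [h, two_mul, C_apply, hm, hzm]

namespace LowersOrderLikeDeriv

variable [CharZero L] {T : LaurentSeries L → LaurentSeries L} {E : ℤ} {κ : L} {t α : L}
  {z : LaurentSeries L}

theorem order_eq_neg (hT : LowersOrderLikeDeriv T E κ) (hE : 0 < E) (hκ : κ ≠ 0)
    (hz : T (T z) = 2 * z ^ 3 + C t * z + C α) (hneg : z.order < 0) :
    z.order = -E := by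
  have hz0 : z ≠ 0 := fun h => by simp [h] at hneg
  set N := z.order
  have ha : z.leadingCoeff ≠ 0 := leadingCoeff_ne_zero.2 hz0
  rcases lt_trichotomy N (-E) with hlt | heq | hgt
  · have h := coeff_eq_two_mul_coeff_pow_three hz (m := 3 * N) (by omega)
      (coeff_eq_zero_of_lt_order (by omega))
    rw [hT.coeff_comp_eq_zero_of_lt_order (by omega), show 3 * N = 3 • N by simp,
      coeff_pow_nsmul_order] at h
    simp [ha] at h
  · exact heq
  · have h := coeff_eq_two_mul_coeff_pow_three hz (m := N - 2 * E) (by omega)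
      (coeff_eq_zero_of_lt_order (by omega))
    rw [hT.coeff_comp_sub_two_mul fun i hi _ => coeff_eq_zero_of_lt_order hi,
      coeff_eq_zero_of_lt_order (x := z ^ 3) (by simp; omega), mul_zero] at h
    simp [hκ, hz0, sub_eq_zero] at h
    omega

theorem leadingCoeff_sq (hT : LowersOrderLikeDeriv T E κ) (hE : 0 < E) (hκ : κ ≠ 0)
    (hz : T (T z) = 2 * z ^ 3 + C t * z + C α) (hneg : z.order < 0) :
    z.leadingCoeff ^ 2 = (E * κ) ^ 2 := by
  have hN := hT.order_eq_neg hE hκ hz hneg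
  have ha : z.leadingCoeff ≠ 0 := leadingCoeff_ne_zero.2 fun h => by simp [h] at hneg
  have h := coeff_eq_two_mul_coeff_pow_three hz (m := z.order - 2 * E) (by omega)
    (coeff_eq_zero_of_lt_order (by omega))
  rw [hT.coeff_comp_sub_two_mul fun i hi _ => coeff_eq_zero_of_lt_order hi, ← leadingCoeff_eq,
    show z.order - 2 * E = 3 • z.order by simp; omega, coeff_pow_nsmul_order, hN] at h
  have h2 : 2 * z.leadingCoeff * (z.leadingCoeff ^ 2 - (E * κ) ^ 2) = 0 := by
    push_cast at h
    linear_combination -h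
  simpa [ha, sub_eq_zero] using h2

theorem coeff_eq_zero_of_not_dvd (hT : LowersOrderLikeDeriv T E κ) (hE : 0 < E) (hκ : κ ≠ 0)
    (hz : T (T z) = 2 * z ^ 3 + C t * z + C α) (hneg : z.order < 0) {n : ℤ} (hn : ¬E ∣ n) :
    z.coeff n = 0 := by
  by_contra hzn
  obtain ⟨k, ⟨hk, hzk⟩, hmin⟩ :=
    Int.exists_least_of_bdd (P := fun i => ¬E ∣ i ∧ z.coeff i ≠ 0)
    ⟨z.order, fun i hi => order_le_of_coeff_ne_zero hi.2⟩ ⟨n, hn, hzn⟩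
  replace hmin : ∀ i < k, ¬E ∣ i → z.coeff i = 0 := fun i hi hEi =>
    by_contra fun h => (hmin i ⟨hEi, h⟩).not_gt hi
  have hN := hT.order_eq_neg hE hκ hz hneg
  have hk2 : ¬E ∣ k - 2 * E := fun h => hk (by simpa using dvd_add h (dvd_mul_left E 2))
  have h := coeff_eq_two_mul_coeff_pow_three hz (m := k - 2 * E) (fun h => hk2 (h ▸ dvd_zero E))
    (hmin _ (by omega) hk2)
  rw [hT.coeff_comp_sub_two_mul fun i hi hdvd => hmin i hi fun hEi =>
      hk (by simpa using dvd_add hdvd hEi),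
    show k - 2 * E = 2 * z.order + k by omega,
    coeff_pow_three_two_mul_order_add (hN ▸ dvd_neg.2 dvd_rfl) hk hzk hmin,
    hT.leadingCoeff_sq hE hκ hz hneg] at h
  have hprod : (k - 3 * E) * (k + 2 * E) = 0 := by
    have : (((k - 3 * E) * (k + 2 * E) : ℤ) : L) * (z.coeff k * κ ^ 2) = 0 := by
      push_cast
      linear_combination h
    exact_mod_cast (mul_eq_zero.1 this).resolve_right (by simp [hzk, hκ])
  rcases mul_eq_zero.1 hprod with h | h
  · exact hk ⟨3, by omega⟩
  · exact hk ⟨-2, by omega⟩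

end LowersOrderLikeDeriv

section Termwise

variable {D : LaurentSeries L →+ LaurentSeries L}

theorem coeff_mul_single_one_zpow (f : LaurentSeries L) (i m : ℤ) :
    (f * single 1 1 ^ i).coeff m = f.coeff (m - i) := by
  rw [← RatFunc.single_zpow, coeff_mul_single, mul_one]

theorem coeff_eq_finsum_of_termwise
    (hD : ∀ f : LaurentSeries L, ∀ n : ℤ, (D f).coeff n = ∑ᶠ i : ℤ,
      (D (C (f.coeff i)) * single 1 1 ^ i
        + (i : LaurentSeries L) * C (f.coeff i) * single 1 1 ^ (i - 1) * D (single 1 1)).coeff n)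
    (f : LaurentSeries L) (m : ℤ) :
    (D f).coeff m = ∑ᶠ i : ℤ, ((D (C (f.coeff i))).coeff (m - i)
      + i * f.coeff i * (D (single 1 1)).coeff (m - i + 1)) := by
  refine (hD f m).trans (finsum_congr fun i => ?_)
  rw [coeff_add, coeff_mul_single_one_zpow, mul_right_comm _ (single 1 1 ^ (i - 1)),
    coeff_mul_single_one_zpow, ← map_intCast C, ← map_mul, C_mul_eq_smul, coeff_smul,
    smul_eq_mul, sub_sub_eq_add_sub, add_sub_right_comm]

variable {e : ℕ} {Y : LaurentSeries L} {γ c₁ c₂ c₃ : L}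

theorem coeff_eq_of_single_one_pow_mul_eq (he : 0 < e)
    (h : single 1 1 ^ (e - 1) * Y = C (e : L)⁻¹ * (C γ + C c₁ * single 1 1 ^ e
      + C c₂ * single 1 1 ^ (2 * e) + C c₃ * single 1 1 ^ (3 * e))) (m : ℤ) :
    Y.coeff m = (e : L)⁻¹ * ((if m = 1 - e then γ else 0) + (if m = 1 then c₁ else 0)
      + (if m = 1 + e then c₂ else 0) + (if m = 1 + 2 * e then c₃ else 0)) := by
  have := congrArg (coeff · (m + (e - 1 : ℕ))) h
  simp only [single_pow, one_pow, nsmul_eq_mul, mul_one, coeff_single_mul, coeff_add, C_apply,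
    coeff_single, one_mul, add_sub_cancel_right, sub_zero, mul_ite, mul_zero] at this
  rw [this]
  congr 1
  refine congrArg₂ (· + ·) (congrArg₂ (· + ·) (congrArg₂ (· + ·) ?_ ?_) ?_) ?_ <;>
    split_ifs <;> first | rfl | omega

theorem coeff_one_sub_of_single_one_pow_mul_eq (he : 0 < e)
    (h : single 1 1 ^ (e - 1) * Y = C (e : L)⁻¹ * (C γ + C c₁ * single 1 1 ^ e
      + C c₂ * single 1 1 ^ (2 * e) + C c₃ * single 1 1 ^ (3 * e))) :
    Y.coeff (1 - e) = (e : L)⁻¹ * γ := by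
  rw [coeff_eq_of_single_one_pow_mul_eq he h]
  simp [he.ne', show (1 - e : ℤ) ≠ 1 + e by omega, show (1 - e : ℤ) ≠ 1 + 2 * e by omega]

theorem coeff_eq_zero_of_single_one_pow_mul_eq (he : 0 < e)
    (h : single 1 1 ^ (e - 1) * Y = C (e : L)⁻¹ * (C γ + C c₁ * single 1 1 ^ e
      + C c₂ * single 1 1 ^ (2 * e) + C c₃ * single 1 1 ^ (3 * e))) {m : ℤ}
    (hm : m < 1 - e ∨ ¬(e : ℤ) ∣ m - 1) : Y.coeff m = 0 := by
  have : m ≠ 1 - e ∧ m ≠ 1 ∧ m ≠ 1 + e ∧ m ≠ 1 + 2 * e := by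
    rcases hm with hm | hm
    · omega
    · refine ⟨?_, ?_, ?_, ?_⟩ <;> rintro rfl <;> simp at hm
  simp [coeff_eq_of_single_one_pow_mul_eq he h, this]

theorem lowersOrderLikeDeriv_of_termwise {E : ℤ} {κ : L} (hE : 0 < E)
    (hC : ∀ a : L, ∀ n : ℤ, (n < 0 ∨ ¬E ∣ n) → (D (C a)).coeff n = 0)
    (hσ : (D (single 1 1)).coeff (1 - E) = κ)
    (hσ₀ : ∀ m : ℤ, (m < 1 - E ∨ ¬E ∣ m - 1) → (D (single 1 1)).coeff m = 0)
    (hD : ∀ f : LaurentSeries L, ∀ n : ℤ, (D f).coeff n = ∑ᶠ i : ℤ,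
      (D (C (f.coeff i)) * single 1 1 ^ i
        + (i : LaurentSeries L) * C (f.coeff i) * single 1 1 ^ (i - 1) * D (single 1 1)).coeff n) :
    LowersOrderLikeDeriv D E κ := by
  have hterm : ∀ (f : LaurentSeries L) (m i : ℤ),
      (E ∣ m - i → i ≤ m + E → f.coeff i = 0) →
      (D (C (f.coeff i))).coeff (m - i) + i * f.coeff i * (D (single 1 1)).coeff (m - i + 1)
        = 0 := by
    intro f m i h
    by_cases hdvd : E ∣ m - i
    · by_cases hle : i ≤ m + E
      · simp [h hdvd hle]
      · rw [hC _ _ (.inl (by omega)), hσ₀ _ (.inl (by omega)), mul_zero, add_zero]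
    · rw [hC _ _ (.inr hdvd), hσ₀ _ (.inr (by simpa using hdvd)), mul_zero, add_zero]
  refine ⟨fun {f m} h => ?_, fun {f j} h => ?_⟩
  · rw [coeff_eq_finsum_of_termwise hD]
    exact finsum_eq_zero_of_forall_eq_zero fun i => hterm f m i (h i)
  · rw [coeff_eq_finsum_of_termwise hD, finsum_eq_single _ j fun i hij =>
        hterm f _ i fun hdvd hle => h i (lt_of_le_of_ne (by omega) hij) <| by
          rw [show j - i = j - E - i + E by ring]
          exact dvd_add hdvd (dvd_refl E),
      hC _ _ (.inl (by omega)), show j - E - j + 1 = 1 - E by ring, hσ, zero_add]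

end Termwise

end

theorem statement_5_general
    (L : Type*) [Field L] [CharZero L]
    (e : ℕ) (he : 0 < e)
    (γ t α : L) (hγ : γ ≠ 0)
    (σ : LaurentSeries L) (hσ : σ = HahnSeries.single (1 : ℤ) 1)
    (D : Derivation ℚ (LaurentSeries L) (LaurentSeries L))
    (hD₁ : ∀ a : L, ∀ n : ℤ, (n < 0 ∨ ¬ (e : ℤ) ∣ n) → (D (HahnSeries.C a)).coeff n = 0)
    (hD₂ : ∃ c₁ c₂ c₃ : L,
      σ ^ (e - 1) * D σ =
        HahnSeries.C ((e : L)⁻¹) *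
          (HahnSeries.C γ + HahnSeries.C c₁ * σ ^ e + HahnSeries.C c₂ * σ ^ (2 * e)
            + HahnSeries.C c₃ * σ ^ (3 * e)))
    (hD₃ : ∀ f : LaurentSeries L, ∀ n : ℤ,
      (D f).coeff n = ∑ᶠ i : ℤ,
        (D (HahnSeries.C (f.coeff i)) * σ ^ i
          + (i : LaurentSeries L) * HahnSeries.C (f.coeff i) * σ ^ (i - 1) * D σ).coeff n) :
    ¬ ∃ z : LaurentSeries L, z ≠ 0 ∧ z.order < 0 ∧
        D (D z) = 2 * z ^ 3 + HahnSeries.C t * z + HahnSeries.C α ∧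
        ∃ n : ℤ, ¬ (e : ℤ) ∣ n ∧ z.coeff n ≠ 0 := by
  rintro ⟨z, -, hneg, hz, n, hn, hzn⟩
  subst hσ
  obtain ⟨c₁, c₂, c₃, hc⟩ := hD₂
  have hE : (0 : ℤ) < e := by exact_mod_cast he
  have hT : LowersOrderLikeDeriv D.toAddMonoidHom e ((e : L)⁻¹ * γ) :=
    lowersOrderLikeDeriv_of_termwise hE hD₁ (coeff_one_sub_of_single_one_pow_mul_eq he hc)
      (fun _ => coeff_eq_zero_of_single_one_pow_mul_eq he hc) hD₃
  exact hzn (hT.coeff_eq_zero_of_not_dvd hE (by simp [he.ne', hγ]) hz hneg hn)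

/-- Suppose `e > 1`. Then there is no nonzero `z ∈ L((σ))` of negative
order which satisfies `D(D(z)) = 2z³ + t·z + α` and has a nonzero coefficient at some
index not divisible by `e`. -/
theorem statement_5
    (L : Type*) [Field L] [CharZero L]
    (e : ℕ) (he : 0 < e)
    (γ t α : L) (hγ : γ ≠ 0)
    (σ : LaurentSeries L) (hσ : σ = HahnSeries.single (1 : ℤ) 1)
    (D : Derivation ℚ (LaurentSeries L) (LaurentSeries L))
    (hD₁ : ∀ a : L, ∀ n : ℤ, (n < 0 ∨ ¬ (e : ℤ) ∣ n) → (D (HahnSeries.C a)).coeff n = 0)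
    (hD₂ : ∃ c₁ c₂ c₃ : L,
      σ ^ (e - 1) * D σ =
        HahnSeries.C ((e : L)⁻¹) *
          (HahnSeries.C γ + HahnSeries.C c₁ * σ ^ e + HahnSeries.C c₂ * σ ^ (2 * e)
            + HahnSeries.C c₃ * σ ^ (3 * e)))
    (hD₃ : ∀ f : LaurentSeries L, ∀ n : ℤ,
      (D f).coeff n = ∑ᶠ i : ℤ,
        (D (HahnSeries.C (f.coeff i)) * σ ^ i
          + (i : LaurentSeries L) * HahnSeries.C (f.coeff i) * σ ^ (i - 1) * D σ).coeff n)
    (he₁ : 1 < e) :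
    ¬ ∃ z : LaurentSeries L, z ≠ 0 ∧ z.order < 0 ∧
        D (D z) = 2 * z ^ 3 + HahnSeries.C t * z + HahnSeries.C α ∧
        ∃ n : ℤ, ¬ (e : ℤ) ∣ n ∧ z.coeff n ≠ 0 :=
  statement_5_general L e he γ t α hγ σ hσ D hD₁ hD₂ hD₃
end

section
/- For every integer i, every coefficient of the Laurent series D(D(σ^i)) − (i(i−e)/e²)·γ²·σ^(i−2e) at an index strictly less than i − e is zero. -/
open HahnSeries

section

variable {L : Type*} [Field L]

theorem C_mul_single_one_zpow (a : L) (k : ℤ) : C a * single (1 : ℤ) 1 ^ k = single k a := by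
  rw [← RatFunc.single_zpow, C_apply, single_mul_single, zero_add, mul_one]

theorem single_one_pow (m : ℕ) : single (1 : ℤ) (1 : L) ^ m = single (m : ℤ) 1 := by
  simp [single_pow]

theorem le_orderTop_C_add_sub_C (e : ℕ) (γ c₁ c₂ c₃ : L) :
    ((e : ℤ) : WithTop ℤ) ≤
      ((C γ : LaurentSeries L) + C c₁ * single (1 : ℤ) 1 ^ e + C c₂ * single (1 : ℤ) 1 ^ (2 * e)
        + C c₃ * single (1 : ℤ) 1 ^ (3 * e) - C γ).orderTop := by
  refine le_orderTop_iff_forall.2 fun j hj ↦ ?_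
  have hje := WithTop.coe_lt_coe.1 hj
  simp only [add_assoc, add_sub_cancel_left, single_one_pow, C_apply, single_mul_single,
    coeff_add, coeff_single]
  rw [if_neg (by omega), if_neg (by omega), if_neg (by omega), add_zero, add_zero]

variable [CharZero L] (D : Derivation ℚ (LaurentSeries L) (LaurentSeries L))

theorem derivation_single (k : ℤ) (a : L) :
    D (single k a) = D (C a) * single (1 : ℤ) 1 ^ k
      + (k : LaurentSeries L) * C a * single (1 : ℤ) 1 ^ (k - 1) * D (single 1 1) := by
  rw [← C_mul_single_one_zpow, Derivation.leibniz, Derivation.leibniz_zpow, smul_eq_mul,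
    smul_eq_mul, zsmul_eq_mul]
  ring

theorem derivation_single_one_eq_of_mul_eq {e : ℕ} (he : 0 < e) {P : LaurentSeries L}
    (h : single (1 : ℤ) 1 ^ (e - 1) * D (single 1 1) = C ((e : L)⁻¹) * P) :
    D (single 1 1) = C ((e : L)⁻¹) * single (1 - e : ℤ) 1 * P := by
  have hunit : single (1 - e : ℤ) (1 : L) * single (1 : ℤ) 1 ^ (e - 1) = 1 := by
    rw [single_one_pow, single_mul_single, one_mul, ← single_zero_one]
    congr 2
    omega
  rw [mul_comm (C _), mul_assoc, ← h, ← mul_assoc, hunit, one_mul]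

section

variable {D} {e : ℕ} {γ : L} {P : LaurentSeries L} (hDC : ∀ a : L, 0 ≤ (D (C a)).orderTop)
  (hDσ : D (single 1 1) = C ((e : L)⁻¹) * single (1 - e : ℤ) 1 * P)
  (hP : ((e : ℤ) : WithTop ℤ) ≤ (P - C γ).orderTop)
include hDC hDσ hP

theorem le_orderTop_derivation_single_sub (k : ℤ) (a : L) :
    (k : WithTop ℤ) ≤ (D (single k a) - single (k - e) (k * a * γ / e)).orderTop := by
  have hlead : (k : LaurentSeries L) * C a * single (1 : ℤ) 1 ^ (k - 1) * D (single 1 1)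
      = single (k - e) (k * a / e) * P := by
    rw [hDσ, ← RatFunc.single_zpow, ← map_intCast C]
    simp only [C_apply, single_mul_single, ← mul_assoc]
    congr 3
    · omega
    · ring
  have hsplit : D (single k a) - single (k - e) (k * a * γ / e)
      = D (C a) * single k 1 + single (k - e) (k * a / e) * (P - C γ) := by
    have hγ : single (k - e) (k * a / e) * C γ = single (k - e) (k * a * γ / e) := by
      rw [C_apply, single_mul_single, add_zero, div_mul_eq_mul_div]
    rw [derivation_single, hlead, ← RatFunc.single_zpow, mul_sub, hγ, add_sub_assoc]
  rw [hsplit]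
  refine min_orderTop_le_orderTop_add.trans' (le_min ?_ ?_)
  · calc (k : WithTop ℤ) = 0 + k := (zero_add _).symm
      _ ≤ (D (C a)).orderTop + (single k (1 : L)).orderTop :=
        add_le_add (hDC a) orderTop_single_le
      _ ≤ _ := orderTop_add_le_mul
  · calc (k : WithTop ℤ) = (k - e : ℤ) + (e : ℤ) := by rw [← WithTop.coe_add, sub_add_cancel]
      _ ≤ (single (k - e) (k * a / e)).orderTop + (P - C γ).orderTop :=
        add_le_add orderTop_single_le hP
      _ ≤ _ := orderTop_add_le_mul

theorem le_orderTop_derivation_single (k : ℤ) (a : L) :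
    ((k - e : ℤ) : WithTop ℤ) ≤ (D (single k a)).orderTop := by
  rw [← sub_add_cancel (D (single k a)) (single (k - e) (k * a * γ / e))]
  refine min_orderTop_le_orderTop_add.trans' (le_min ?_ orderTop_single_le)
  exact (WithTop.coe_le_coe.2 (by omega)).trans
    (le_orderTop_derivation_single_sub hDC hDσ hP k a)

end

theorem le_orderTop_derivation {s m : ℤ}
    (hsingle : ∀ (k : ℤ) (a : L), ((k - s : ℤ) : WithTop ℤ) ≤ (D (single k a)).orderTop)
    (htermwise : ∀ (f : LaurentSeries L) (n : ℤ), (D f).coeff n = ∑ᶠ i : ℤ,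
      (D (C (f.coeff i)) * single (1 : ℤ) 1 ^ i
        + (i : LaurentSeries L) * C (f.coeff i) * single (1 : ℤ) 1 ^ (i - 1)
          * D (single 1 1)).coeff n)
    {f : LaurentSeries L} (hf : (m : WithTop ℤ) ≤ f.orderTop) :
    ((m - s : ℤ) : WithTop ℤ) ≤ (D f).orderTop := by
  refine le_orderTop_iff_forall.2 fun n hn ↦ ?_
  rw [htermwise]
  simp only [← derivation_single]
  refine finsum_eq_zero_of_forall_eq_zero fun i ↦ ?_
  by_cases hi : i < m
  · rw [coeff_eq_zero_of_lt_orderTop (WithTop.coe_lt_coe.2 hi |>.trans_le hf), single_eq_zero,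
      map_zero, coeff_zero]
  · refine coeff_eq_zero_of_lt_orderTop ((WithTop.coe_lt_coe.2 ?_).trans_le (hsingle i _))
    have hn' := WithTop.coe_lt_coe.1 hn
    omega

end

theorem statement_6_general
    (L : Type*) [Field L] [CharZero L]
    (e : ℕ) (he : 0 < e)
    (γ : L)
    (σ : LaurentSeries L) (hσ : σ = HahnSeries.single (1 : ℤ) 1)
    (D : Derivation ℚ (LaurentSeries L) (LaurentSeries L))
    (hD₁ : ∀ a : L, ∀ n : ℤ, (n < 0 ∨ ¬ (e : ℤ) ∣ n) → (D (HahnSeries.C a)).coeff n = 0)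
    (hD₂ : ∃ c₁ c₂ c₃ : L,
      σ ^ (e - 1) * D σ =
        HahnSeries.C ((e : L)⁻¹) *
          (HahnSeries.C γ + HahnSeries.C c₁ * σ ^ e + HahnSeries.C c₂ * σ ^ (2 * e)
            + HahnSeries.C c₃ * σ ^ (3 * e)))
    (hD₃ : ∀ f : LaurentSeries L, ∀ n : ℤ,
      (D f).coeff n = ∑ᶠ i : ℤ,
        (D (HahnSeries.C (f.coeff i)) * σ ^ i
          + (i : LaurentSeries L) * HahnSeries.C (f.coeff i) * σ ^ (i - 1) * D σ).coeff n) :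
    ∀ i n : ℤ, n < i - e →
      (D (D (σ ^ i))
        - HahnSeries.C (((i * (i - e) : ℤ) : L) / (e : L) ^ 2 * γ ^ 2)
            * σ ^ (i - 2 * e)).coeff n = 0 := by
  subst hσ
  obtain ⟨c₁, c₂, c₃, h⟩ := hD₂
  have hDσ := derivation_single_one_eq_of_mul_eq D he h
  have hP := le_orderTop_C_add_sub_C e γ c₁ c₂ c₃
  have hDC (a : L) : 0 ≤ (D (C a)).orderTop :=
    le_orderTop_iff_forall.2 fun n hn ↦ hD₁ a n (Or.inl (WithTop.coe_lt_coe.1 hn))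
  have hsub := le_orderTop_derivation_single_sub hDC hDσ hP
  intro i n hn
  have hsplit : D (D (single (1 : ℤ) 1 ^ i))
      - C (((i * (i - e) : ℤ) : L) / (e : L) ^ 2 * γ ^ 2) * single (1 : ℤ) 1 ^ (i - 2 * e)
      = D (D (single i 1) - single (i - e) (i * 1 * γ / e))
        + (D (single (i - e) (i * 1 * γ / e))
          - single (i - e - e) (((i - e : ℤ) : L) * (i * 1 * γ / e) * γ / e)) := by
    rw [← RatFunc.single_zpow, C_mul_single_one_zpow, map_sub, sub_add_sub_cancel]
    congr 3
    · ring
    · push_cast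
      ring
  refine coeff_eq_zero_of_lt_orderTop ?_
  rw [hsplit]
  refine min_orderTop_le_orderTop_add.trans_lt' (lt_min ?_ ?_)
  · exact (WithTop.coe_lt_coe.2 hn).trans_le
      (le_orderTop_derivation D (le_orderTop_derivation_single hDC hDσ hP) hD₃ (hsub i 1))
  · exact (WithTop.coe_lt_coe.2 hn).trans_le (hsub (i - e) _)

/-- For every integer `i`, every coefficient of the Laurent series
`D(D(σ^i)) − (i(i−e)/e²)·γ²·σ^(i−2e)` at an index strictly less than `i − e` is zero. -/
theorem statement_6
    (L : Type*) [Field L] [CharZero L]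
    (e : ℕ) (he : 0 < e)
    (γ t α : L) (hγ : γ ≠ 0)
    (σ : LaurentSeries L) (hσ : σ = HahnSeries.single (1 : ℤ) 1)
    (D : Derivation ℚ (LaurentSeries L) (LaurentSeries L))
    (hD₁ : ∀ a : L, ∀ n : ℤ, (n < 0 ∨ ¬ (e : ℤ) ∣ n) → (D (HahnSeries.C a)).coeff n = 0)
    (hD₂ : ∃ c₁ c₂ c₃ : L,
      σ ^ (e - 1) * D σ =
        HahnSeries.C ((e : L)⁻¹) *
          (HahnSeries.C γ + HahnSeries.C c₁ * σ ^ e + HahnSeries.C c₂ * σ ^ (2 * e)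
            + HahnSeries.C c₃ * σ ^ (3 * e)))
    (hD₃ : ∀ f : LaurentSeries L, ∀ n : ℤ,
      (D f).coeff n = ∑ᶠ i : ℤ,
        (D (HahnSeries.C (f.coeff i)) * σ ^ i
          + (i : LaurentSeries L) * HahnSeries.C (f.coeff i) * σ ^ (i - 1) * D σ).coeff n) :
    ∀ i n : ℤ, n < i - e →
      (D (D (σ ^ i))
        - HahnSeries.C (((i * (i - e) : ℤ) : L) / (e : L) ^ 2 * γ ^ 2)
            * σ ^ (i - 2 * e)).coeff n = 0 :=
  statement_6_general L e he γ σ hσ D hD₁ hD₂ hD₃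
end

section
/- Let z = Σ_i a_iσ^i ∈ L((σ)) and let l be an integer not divisible by e such that a_i = 0 for every index i < l with i not divisible by e. Then the coefficient of σ^(l−2e) in D(D(z)) equals (l(l−e)/e²)·γ²·a_l. -/
/-!
By the termwise formula, `(D f)_n = Σ_i (D a_i)_{n-i} + i a_i (Dσ)_{n-i+1}`. Both `D a_i` and
`σ^(e-1) Dσ` lie in `L[[σ^e]]`, the latter with constant term `γ/e`. So if `e ∤ n` and the
coefficients of `f` off `eℤ` vanish up to `n`, only `i = n + e` contributes and
`(D f)_n = (n + e) a_{n+e} γ/e`. In particular `D z` again has vanishing coefficients off `eℤ`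
below `l - e`, with `(D z)_{l-e} = l a_l γ/e`, and applying this a second time gives the claim.
-/

open HahnSeries

section
variable {L : Type*} [Field L]

/-- `f ∈ L[[σ^e]]`, with `σ = single 1 1`. -/
def IsPowerSeriesInPow (e : ℕ) (f : LaurentSeries L) : Prop :=
  ∀ n : ℤ, (n < 0 ∨ ¬ (e : ℤ) ∣ n) → f.coeff n = 0

namespace IsPowerSeriesInPow

variable {e : ℕ} {f g : LaurentSeries L}

theorem add (hf : IsPowerSeriesInPow e f) (hg : IsPowerSeriesInPow e g) :
    IsPowerSeriesInPow e (f + g) := fun n hn => by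
  rw [coeff_add, hf n hn, hg n hn, add_zero]

theorem C_mul (hf : IsPowerSeriesInPow e f) (a : L) : IsPowerSeriesInPow e (C a * f) :=
  fun n hn => by rw [C_mul_eq_smul, coeff_smul, hf n hn, smul_zero]

end IsPowerSeriesInPow

theorem isPowerSeriesInPow_single_one_pow {e m : ℕ} (hm : e ∣ m) :
    IsPowerSeriesInPow e (single (1 : ℤ) (1 : L) ^ m) := by
  rintro n hn
  rw [← RatFunc.single_one_eq_pow, coeff_single, if_neg]
  rintro rfl
  rcases hn with hn | hn
  · omega
  · exact hn (Int.natCast_dvd_natCast.mpr hm)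

theorem isPowerSeriesInPow_C {e : ℕ} (a : L) : IsPowerSeriesInPow e (C a) := by
  simpa using (isPowerSeriesInPow_single_one_pow (L := L) (dvd_zero e)).C_mul a

theorem coeff_leibniz_term (X Y : LaurentSeries L) (a : L) (i n : ℤ) :
    (X * single (1 : ℤ) 1 ^ i
      + (i : LaurentSeries L) * C a * single (1 : ℤ) 1 ^ (i - 1) * Y).coeff n
      = X.coeff (n - i) + i * a * Y.coeff (n - i + 1) := by
  rw [← RatFunc.single_zpow, ← RatFunc.single_zpow, ← map_intCast C, ← map_mul, C_apply,
    single_mul_single, zero_add, mul_one, coeff_add, coeff_mul_single, mul_one, coeff_single_mul,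
    sub_sub_eq_add_sub]
  ring_nf

theorem coeff_eq_coeff_single_one_pow_mul (Y : LaurentSeries L) (m : ℕ) (k : ℤ) :
    Y.coeff k = (single (1 : ℤ) (1 : L) ^ m * Y).coeff (k + m) := by
  rw [← RatFunc.single_one_eq_pow, coeff_single_mul, one_mul, add_sub_cancel_right]

end

section
variable {L : Type*} [Field L] [CharZero L] {e : ℕ}
  {D : Derivation ℚ (LaurentSeries L) (LaurentSeries L)}

theorem coeff_derivation_eq_of_coeff_eq_zero (he : 0 < e)
    (hC : ∀ a : L, IsPowerSeriesInPow e (D (C a : LaurentSeries L)))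
    (hσ : IsPowerSeriesInPow e (single (1 : ℤ) (1 : L) ^ (e - 1) * D (single 1 1)))
    (hD : ∀ (f : LaurentSeries L) (n : ℤ), (D f).coeff n = ∑ᶠ i : ℤ,
      (D (C (f.coeff i)) * single (1 : ℤ) 1 ^ i
        + (i : LaurentSeries L) * C (f.coeff i) * single (1 : ℤ) 1 ^ (i - 1)
          * D (single 1 1)).coeff n)
    {f : LaurentSeries L} {n : ℤ} (hn : ¬ (e : ℤ) ∣ n)
    (hf : ∀ i ≤ n, ¬ (e : ℤ) ∣ i → f.coeff i = 0) :
    (D f).coeff n =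
      (n + e : ℤ) * f.coeff (n + e)
        * (single (1 : ℤ) (1 : L) ^ (e - 1) * D (single 1 1)).coeff 0 := by
  set g := single (1 : ℤ) (1 : L) ^ (e - 1) * D (single 1 1)
  have hterm (i : ℤ) :
      (D (C (f.coeff i)) * single (1 : ℤ) 1 ^ i
        + (i : LaurentSeries L) * C (f.coeff i) * single (1 : ℤ) 1 ^ (i - 1)
          * D (single 1 1)).coeff n
      = (D (C (f.coeff i))).coeff (n - i) + i * f.coeff i * g.coeff (n - i + e) := by
    rw [coeff_leibniz_term, coeff_eq_coeff_single_one_pow_mul (D (single 1 1)) (e - 1),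
      show n - i + 1 + ((e - 1 : ℕ) : ℤ) = n - i + e by omega]
  rw [hD, finsum_eq_single _ (n + e), hterm, hC _ _ (.inl (by omega)),
    show n - (n + e) + e = 0 by ring]
  · push_cast; ring
  intro i hi
  rw [hterm]
  -- for `i ≠ n + e`, either `f.coeff i = 0` or both indices miss the supports in `L[[σ^e]]`
  by_cases hfi : i ≤ n ∧ ¬ (e : ℤ) ∣ i
  · simp [hf i hfi.1 hfi.2]
  rw [not_and_or, not_le, not_not] at hfi
  rcases hfi with hlt | hdvd
  · have h2 : n - i + e < 0 ∨ ¬ (e : ℤ) ∣ n - i + e := by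
      by_contra! h
      have := Int.le_of_dvd (by omega) h.2
      omega
    rw [hC _ _ (.inl (by omega)), hσ _ h2, mul_zero, add_zero]
  · have h1 : ¬ (e : ℤ) ∣ n - i := fun h => hn (by simpa using dvd_add h hdvd)
    have h2 : ¬ (e : ℤ) ∣ n - i + e := fun h => h1 ((dvd_add_left (dvd_refl _)).mp h)
    rw [hC _ _ (.inr h1), hσ _ (.inr h2), mul_zero, add_zero]

theorem coeff_derivation_sub_of_coeff_eq_zero (he : 0 < e)
    (hC : ∀ a : L, IsPowerSeriesInPow e (D (C a : LaurentSeries L)))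
    (hσ : IsPowerSeriesInPow e (single (1 : ℤ) (1 : L) ^ (e - 1) * D (single 1 1)))
    (hD : ∀ (f : LaurentSeries L) (n : ℤ), (D f).coeff n = ∑ᶠ i : ℤ,
      (D (C (f.coeff i)) * single (1 : ℤ) 1 ^ i
        + (i : LaurentSeries L) * C (f.coeff i) * single (1 : ℤ) 1 ^ (i - 1)
          * D (single 1 1)).coeff n)
    {f : LaurentSeries L} {l : ℤ} (hl : ¬ (e : ℤ) ∣ l)
    (hf : ∀ i < l, ¬ (e : ℤ) ∣ i → f.coeff i = 0) :
    (∀ i < l - e, ¬ (e : ℤ) ∣ i → (D f).coeff i = 0) ∧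
      (D f).coeff (l - e) =
        l * f.coeff l * (single (1 : ℤ) (1 : L) ^ (e - 1) * D (single 1 1)).coeff 0 := by
  refine ⟨fun i hi hei => ?_, ?_⟩
  · have hei' : ¬ (e : ℤ) ∣ i + e := fun h => hei (dvd_add_self_right.mp h)
    rw [coeff_derivation_eq_of_coeff_eq_zero he hC hσ hD hei (fun j hj => hf j (by omega)),
      hf _ (by omega) hei', mul_zero, zero_mul]
  · have hl' : ¬ (e : ℤ) ∣ l - e := fun h => hl (dvd_sub_self_right.mp h)
    rw [coeff_derivation_eq_of_coeff_eq_zero he hC hσ hD hl' (fun j hj => hf j (by omega)),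
      sub_add_cancel]

end

theorem statement_7_general
    (L : Type*) [Field L] [CharZero L]
    (e : ℕ) (he : 0 < e)
    (γ : L)
    (σ : LaurentSeries L) (hσ : σ = HahnSeries.single (1 : ℤ) 1)
    (D : Derivation ℚ (LaurentSeries L) (LaurentSeries L))
    (hD₁ : ∀ a : L, ∀ n : ℤ, (n < 0 ∨ ¬ (e : ℤ) ∣ n) → (D (HahnSeries.C a)).coeff n = 0)
    (hD₂ : ∃ c₁ c₂ c₃ : L,
      σ ^ (e - 1) * D σ =
        HahnSeries.C ((e : L)⁻¹) *
          (HahnSeries.C γ + HahnSeries.C c₁ * σ ^ e + HahnSeries.C c₂ * σ ^ (2 * e)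
            + HahnSeries.C c₃ * σ ^ (3 * e)))
    (hD₃ : ∀ f : LaurentSeries L, ∀ n : ℤ,
      (D f).coeff n = ∑ᶠ i : ℤ,
        (D (HahnSeries.C (f.coeff i)) * σ ^ i
          + (i : LaurentSeries L) * HahnSeries.C (f.coeff i) * σ ^ (i - 1) * D σ).coeff n)
    (z : LaurentSeries L) (l : ℤ) (hl : ¬ (e : ℤ) ∣ l)
    (hvanish : ∀ i : ℤ, i < l → ¬ (e : ℤ) ∣ i → z.coeff i = 0) :
    (D (D z)).coeff (l - 2 * e) = ((l * (l - e) : ℤ) : L) / (e : L) ^ 2 * γ ^ 2 * z.coeff l := by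
  obtain ⟨c₁, c₂, c₃, hD₂⟩ := hD₂
  subst hσ
  have hσ_mem {m : ℕ} (hm : e ∣ m) : IsPowerSeriesInPow e (single (1 : ℤ) (1 : L) ^ m) :=
    isPowerSeriesInPow_single_one_pow hm
  have hg : IsPowerSeriesInPow e (single (1 : ℤ) (1 : L) ^ (e - 1) * D (single 1 1)) := by
    rw [hD₂]
    exact ((((isPowerSeriesInPow_C γ).add ((hσ_mem dvd_rfl).C_mul c₁)).add
      ((hσ_mem (dvd_mul_left e 2)).C_mul c₂)).add ((hσ_mem (dvd_mul_left e 3)).C_mul c₃)).C_mul _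
  have hg₀ : (single (1 : ℤ) (1 : L) ^ (e - 1) * D (single 1 1)).coeff 0 = (e : L)⁻¹ * γ := by
    rw [hD₂, C_mul_eq_smul, coeff_smul, smul_eq_mul]
    simp [he.ne', (Int.natCast_pos.mpr he).ne]
  obtain ⟨hDz, hDz_sub⟩ := coeff_derivation_sub_of_coeff_eq_zero he hD₁ hg hD₃ hl hvanish
  have hl' : ¬ (e : ℤ) ∣ l - e := fun h => hl (dvd_sub_self_right.mp h)
  rw [show l - 2 * e = l - e - e by ring,
    (coeff_derivation_sub_of_coeff_eq_zero he hD₁ hg hD₃ hl' hDz).2, hDz_sub, hg₀]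
  have he₀ : (e : L) ≠ 0 := Nat.cast_ne_zero.mpr he.ne'
  push_cast
  field_simp

/-- Let `z = Σ_i a_iσ^i ∈ L((σ))` and let `l` be an integer not divisible
by `e` such that `a_i = 0` for every index `i < l` with `i` not divisible by `e`.
Then the coefficient of `σ^(l−2e)` in `D(D(z))` equals `(l(l−e)/e²)·γ²·a_l`. -/
theorem statement_7
    (L : Type*) [Field L] [CharZero L]
    (e : ℕ) (he : 0 < e)
    (γ t α : L) (hγ : γ ≠ 0)
    (σ : LaurentSeries L) (hσ : σ = HahnSeries.single (1 : ℤ) 1)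
    (D : Derivation ℚ (LaurentSeries L) (LaurentSeries L))
    (hD₁ : ∀ a : L, ∀ n : ℤ, (n < 0 ∨ ¬ (e : ℤ) ∣ n) → (D (HahnSeries.C a)).coeff n = 0)
    (hD₂ : ∃ c₁ c₂ c₃ : L,
      σ ^ (e - 1) * D σ =
        HahnSeries.C ((e : L)⁻¹) *
          (HahnSeries.C γ + HahnSeries.C c₁ * σ ^ e + HahnSeries.C c₂ * σ ^ (2 * e)
            + HahnSeries.C c₃ * σ ^ (3 * e)))
    (hD₃ : ∀ f : LaurentSeries L, ∀ n : ℤ,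
      (D f).coeff n = ∑ᶠ i : ℤ,
        (D (HahnSeries.C (f.coeff i)) * σ ^ i
          + (i : LaurentSeries L) * HahnSeries.C (f.coeff i) * σ ^ (i - 1) * D σ).coeff n)
    (z : LaurentSeries L) (l : ℤ) (hl : ¬ (e : ℤ) ∣ l)
    (hvanish : ∀ i : ℤ, i < l → ¬ (e : ℤ) ∣ i → z.coeff i = 0) :
    (D (D z)).coeff (l - 2 * e) = ((l * (l - e) : ℤ) : L) / (e : L) ^ 2 * γ ^ 2 * z.coeff l :=
  statement_7_general L e he γ σ hσ D hD₁ hD₂ hD₃ z l hl hvanish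
end

section
/- Let z = Σ_i a_iσ^i ∈ L((σ)) have order r ≥ 0, and let l be an integer not divisible by e such that a_i = 0 for every index i < l with i not divisible by e. Then the coefficient of σ^(l−2e) in the Laurent series z³ is zero. -/
/-!
Every exponent occurring in `z` is nonnegative and either a multiple of `e` or at least `l`,
and this set of exponents is closed under addition, so it contains every exponent occurring in
`z³`. The exponent `l - 2e` is smaller than `l` and, since `e ∤ l`, not a multiple of `e`.
-/

def nonnegMultiplesOrGE (n l : ℤ) : AddSubmonoid ℤ where
  carrier := {i | 0 ≤ i ∧ (n ∣ i ∨ l ≤ i)}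
  zero_mem' := ⟨le_rfl, Or.inl (dvd_zero n)⟩
  add_mem' := by
    rintro i j ⟨hi₀, hi | hi⟩ ⟨hj₀, hj | hj⟩
    · exact ⟨add_nonneg hi₀ hj₀, Or.inl (dvd_add hi hj)⟩
    all_goals exact ⟨add_nonneg hi₀ hj₀, Or.inr (by omega)⟩

theorem sub_notMem_nonnegMultiplesOrGE {n l m : ℤ} (hl : ¬ n ∣ l) (hm : n ∣ m) (hm₀ : 0 < m) :
    l - m ∉ nonnegMultiplesOrGE n l := by
  rintro ⟨-, hdvd | hle⟩
  · exact hl (by simpa using dvd_add hdvd hm)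
  · omega

theorem LaurentSeries.support_subset_nonnegMultiplesOrGE {R : Type*} [Zero R]
    {z : LaurentSeries R} (hr : 0 ≤ z.order) {n l : ℤ}
    (hvanish : ∀ i : ℤ, i < l → ¬ n ∣ i → z.coeff i = 0) :
    z.support ⊆ nonnegMultiplesOrGE n l := by
  intro i hi
  refine ⟨hr.trans (HahnSeries.order_le_of_coeff_ne_zero hi), ?_⟩
  by_contra! h
  exact hi (hvanish i h.2 h.1)

theorem statement_8_general
    (L : Type*) [Field L]
    (e : ℕ) (he : 0 < e)
    (z : LaurentSeries L) (hr : 0 ≤ z.order)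
    (l : ℤ) (hl : ¬ (e : ℤ) ∣ l)
    (hvanish : ∀ i : ℤ, i < l → ¬ (e : ℤ) ∣ i → z.coeff i = 0) :
    (z ^ 3).coeff (l - 2 * e) = 0 := by
  have hsupport : (z ^ 3).support ⊆ nonnegMultiplesOrGE e l :=
    (HahnSeries.SummableFamily.support_pow_subset_closure z 3).trans <|
      AddSubmonoid.closure_le.mpr <| LaurentSeries.support_subset_nonnegMultiplesOrGE hr hvanish
  have hexp : l - 2 * e ∉ nonnegMultiplesOrGE e l :=
    sub_notMem_nonnegMultiplesOrGE hl (dvd_mul_left _ _) (by omega)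
  by_contra hcoeff
  exact hexp (hsupport ((HahnSeries.mem_support _ _).mpr hcoeff))

/-- Let `z = Σ_i a_iσ^i ∈ L((σ))` have order `r ≥ 0`, and let `l` be an
integer not divisible by `e` such that `a_i = 0` for every index `i < l` with `i` not
divisible by `e`. Then the coefficient of `σ^(l−2e)` in the Laurent series `z³` is
zero. -/
theorem statement_8
    (L : Type*) [Field L]
    (e : ℕ) (he : 0 < e)
    (z : LaurentSeries L) (hz₀ : z ≠ 0) (hr : 0 ≤ z.order)
    (l : ℤ) (hl : ¬ (e : ℤ) ∣ l)
    (hvanish : ∀ i : ℤ, i < l → ¬ (e : ℤ) ∣ i → z.coeff i = 0) :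
    (z ^ 3).coeff (l - 2 * e) = 0 :=
  statement_8_general L e he z hr l hl hvanish
end

section
/- Let z = Σ_i a_iσ^i ∈ L((σ)) have order exactly −e, and let l be an integer not divisible by e such that a_i = 0 for every index i < l with i not divisible by e. Then the coefficient of σ^(l−2e) in the Laurent series z³ equals 3·(a_{−e})²·a_l. -/
/-! Split off the monomial `a_l σ^l`, writing `z = y + a_l σ^l`. Every exponent in the support of
`y` is at least `-e` and is either divisible by `e` or larger than `l`; three such exponents never
add up to `l - 2e`, which is not divisible by `e`, so `y³` does not contribute. Of the remaining
terms of `(y + a_l σ^l)³` only `3 y² a_l σ^l` reaches `σ^(l-2e)`, through the lowest term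
`a_{-e}² σ^(-2e)` of `y²`. -/

theorem Int.add_add_ne_sub_two_mul {e l i j k : ℤ} (hl : ¬ e ∣ l)
    (hi : -e ≤ i ∧ (e ∣ i ∨ l < i)) (hj : -e ≤ j ∧ (e ∣ j ∨ l < j))
    (hk : -e ≤ k ∧ (e ∣ k ∨ l < k)) : i + j + k ≠ l - 2 * e := by
  intro h
  obtain ⟨hi, hdi | hli⟩ := hi <;> obtain ⟨hj, hdj | hlj⟩ := hj <;>
    obtain ⟨hk, hdk | hlk⟩ := hk <;> try omega
  exact hl (by rw [show l = i + j + k + 2 * e by omega]; exact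
    ((hdi.add hdj).add hdk).add (dvd_mul_left e 2))

namespace HahnSeries

section Mul

variable {Γ R : Type*} [AddCommMonoid Γ] [LinearOrder Γ] [IsOrderedCancelAddMonoid Γ]
  [NonUnitalNonAssocSemiring R]

theorem coeff_mul_eq_zero_of_forall_add_ne {x y : R⟦Γ⟧} {a : Γ}
    (h : ∀ i ∈ x.support, ∀ j ∈ y.support, i + j ≠ a) : (x * y).coeff a = 0 := by
  rw [coeff_mul]
  refine Finset.sum_eq_zero fun ij hij => ?_
  obtain ⟨hi, hj, hij⟩ := Finset.mem_antidiagonal.mp hij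
  exact absurd hij (h _ hi _ hj)

theorem coeff_mul_mul_eq_zero_of_forall_add_add_ne {x y w : R⟦Γ⟧} {a : Γ}
    (h : ∀ i ∈ x.support, ∀ j ∈ y.support, ∀ k ∈ w.support, i + j + k ≠ a) :
    (x * y * w).coeff a = 0 := by
  refine coeff_mul_eq_zero_of_forall_add_ne fun m hm k hk => ?_
  obtain ⟨i, hi, j, hj, rfl⟩ := Set.mem_add.mp (support_mul_subset hm)
  exact h i hi j hj k hk

theorem coeff_mul_add_of_forall_lt {x y : R⟦Γ⟧} {n m : Γ} (hx : ∀ i < n, x.coeff i = 0)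
    (hy : ∀ j < m, y.coeff j = 0) : (x * y).coeff (n + m) = x.coeff n * y.coeff m := by
  rw [coeff_mul]
  refine Finset.sum_eq_single (n, m) (fun ij hij hne => ?_) fun hnm => ?_
  · obtain ⟨hi, hj, hij⟩ := Finset.mem_antidiagonal.mp hij
    have hni : n ≤ ij.1 := not_lt.mp fun h => hi (hx _ h)
    have hmj : m ≤ ij.2 := not_lt.mp fun h => hj (hy _ h)
    obtain ⟨rfl, rfl⟩ := (add_eq_add_iff_eq_and_eq hni hmj).mp hij.symm
    exact absurd rfl hne
  · by_contra hne
    exact hnm (Finset.mem_antidiagonal.mpr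
      ⟨left_ne_zero_of_mul hne, right_ne_zero_of_mul hne, rfl⟩)

end Mul

theorem coeff_sub_single_coeff {Γ R : Type*} [PartialOrder Γ] [DecidableEq Γ] [AddGroup R]
    (x : R⟦Γ⟧) (a i : Γ) :
    (x - single a (x.coeff a)).coeff i = if i = a then 0 else x.coeff i := by
  by_cases h : i = a <;> simp [h, coeff_single_of_ne]

theorem coeff_add_single_pow_three {R : Type*} [CommRing R] {y : R⟦ℤ⟧} {n l : ℤ} {c : R}
    (hy_low : ∀ i < n, y.coeff i = 0) (hy_cube : (y ^ 3).coeff (l + 2 * n) = 0) (hln : l ≠ n)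
    (hc : c = 0 ∨ n < l) :
    ((y + single l c) ^ 3).coeff (l + 2 * n) = 3 * y.coeff n ^ 2 * c := by
  have h_sq : (y ^ 2 * single l c).coeff (l + 2 * n) = y.coeff n ^ 2 * c := by
    rw [coeff_mul_single, sq, show l + 2 * n - l = n + n by ring,
      coeff_mul_add_of_forall_lt hy_low hy_low, sq]
  have h_lin : (y * single l c ^ 2).coeff (l + 2 * n) = 0 := by
    rw [single_pow, coeff_mul_single]
    rcases hc with rfl | hnl
    · simp
    · rw [hy_low _ (by simp; omega), zero_mul]
  have h_const : (single l c ^ 3).coeff (l + 2 * n) = 0 := by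
    rw [single_pow, coeff_single_of_ne (by simp; omega)]
  have h_expand : (y + single l c) ^ 3 = y ^ 3 + 3 • (y ^ 2 * single l c)
      + 3 • (y * single l c ^ 2) + single l c ^ 3 := by ring
  rw [h_expand, coeff_add, coeff_add, coeff_add, coeff_smul, coeff_smul, hy_cube, h_sq, h_lin,
    h_const]
  simp [mul_assoc]

end HahnSeries

theorem statement_9_general
    (L : Type*) [Field L]
    (e : ℕ)
    (z : LaurentSeries L) (hord : z.order = -(e : ℤ))
    (l : ℤ) (hl : ¬ (e : ℤ) ∣ l)
    (hvanish : ∀ i : ℤ, i < l → ¬ (e : ℤ) ∣ i → z.coeff i = 0) :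
    (z ^ 3).coeff (l - 2 * e) = 3 * z.coeff (-(e : ℤ)) ^ 2 * z.coeff l := by
  obtain ⟨y, hy⟩ : ∃ y, y = z - HahnSeries.single l (z.coeff l) := ⟨_, rfl⟩
  have hy_coeff : ∀ i, y.coeff i = if i = l then 0 else z.coeff i :=
    hy ▸ HahnSeries.coeff_sub_single_coeff z l
  have hl_ne : l ≠ -e := fun h => hl ⟨-1, by omega⟩
  have hy_low : ∀ i < -(e : ℤ), y.coeff i = 0 := fun i hi => by
    simp [hy_coeff, HahnSeries.coeff_eq_zero_of_lt_order (hord ▸ hi : i < z.order)]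
  have hy_support : ∀ i ∈ y.support, -(e : ℤ) ≤ i ∧ ((e : ℤ) ∣ i ∨ l < i) := by
    intro i hi
    refine ⟨not_lt.mp fun h => hi (hy_low i h), ?_⟩
    by_contra! h
    rcases h.2.lt_or_eq with h' | rfl
    · exact hi (by simp [hy_coeff, h'.ne, hvanish i h' h.1])
    · exact hi (by simp [hy_coeff])
  have hy_cube : (y ^ 3).coeff (l - 2 * e) = 0 := by
    rw [pow_three', HahnSeries.coeff_mul_mul_eq_zero_of_forall_add_add_ne]
    exact fun i hi j hj k hk =>
      Int.add_add_ne_sub_two_mul hl (hy_support i hi) (hy_support j hj) (hy_support k hk)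
  have hc : z.coeff l = 0 ∨ -(e : ℤ) < l := or_iff_not_imp_left.mpr fun hc =>
    (hord ▸ HahnSeries.order_le_of_coeff_ne_zero hc).lt_of_ne hl_ne.symm
  have hz : z = y + HahnSeries.single l (z.coeff l) := by rw [hy, sub_add_cancel]
  have h_index : l - 2 * (e : ℤ) = l + 2 * -(e : ℤ) := by ring
  conv_lhs => rw [hz, h_index]
  rw [HahnSeries.coeff_add_single_pow_three hy_low (h_index ▸ hy_cube) hl_ne hc, hy_coeff,
    if_neg hl_ne.symm]

/-- Let `z = Σ_i a_iσ^i ∈ L((σ))` have order exactly `−e`, and let `l` be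
an integer not divisible by `e` such that `a_i = 0` for every index `i < l` with `i`
not divisible by `e`. Then the coefficient of `σ^(l−2e)` in the Laurent series `z³`
equals `3·(a_{−e})²·a_l`. -/
theorem statement_9
    (L : Type*) [Field L]
    (e : ℕ) (he : 0 < e)
    (z : LaurentSeries L) (hz₀ : z ≠ 0) (hord : z.order = -(e : ℤ))
    (l : ℤ) (hl : ¬ (e : ℤ) ∣ l)
    (hvanish : ∀ i : ℤ, i < l → ¬ (e : ℤ) ∣ i → z.coeff i = 0) :
    (z ^ 3).coeff (l - 2 * e) = 3 * z.coeff (-(e : ℤ)) ^ 2 * z.coeff l :=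
  statement_9_general L e z hord l hl hvanish
end

section
/- Let F ∈ K[X₁, X₂] be an irreducible polynomial and β ∈ M an element with F(β, u) = 0. If u − D₂(β) = D₁(β)·(2β³ + tβ + α), then F divides the polynomial F^δ + X₂·F_{X₁} + (2X₁³ + tX₁ + α)·F_{X₂} in K[X₁, X₂]. -/
/-!
With `c = 2β³ + tβ + α`, the derivation `D = D₂ + c • D₁` of `M` extends `δ` and satisfies
`D β = u`, `D u = c`. Applying `D` to `F(β, u) = 0` and expanding by the chain rule shows that
`G = F^δ + X₂ F_{X₁} + (2X₁³ + tX₁ + α) F_{X₂}` also vanishes at `(β, u)`. Since `u` is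
transcendental, `K[X₂]` embeds into `M` by `X₂ ↦ u`, and Gauss's lemma over `K[X₂]` shows that an
irreducible polynomial vanishing at `(β, u)` divides every polynomial vanishing there.
-/

open MvPolynomial

namespace MvPolynomial

variable {σ R S : Type*} [CommSemiring R] [CommSemiring S]

noncomputable def mapCoeffs (f : R →+ S) (p : MvPolynomial σ R) : MvPolynomial σ S :=
  ∑ m ∈ p.support, monomial m (f (p.coeff m))

@[simp]
theorem coeff_mapCoeffs (f : R →+ S) (p : MvPolynomial σ R) (m : σ →₀ ℕ) :
    (mapCoeffs f p).coeff m = f (p.coeff m) := by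
  classical
  rw [mapCoeffs, coeff_sum]
  simp only [coeff_monomial, Finset.sum_ite_eq', mem_support_iff]
  split_ifs with h
  · rfl
  · rw [not_not.mp h, map_zero]

theorem mapCoeffs_C (f : R →+ S) (a : R) : mapCoeffs f (C a : MvPolynomial σ R) = C (f a) := by
  classical
  ext m
  simp only [coeff_mapCoeffs, coeff_C, apply_ite f, map_zero]

theorem mapCoeffs_add (f : R →+ S) (p q : MvPolynomial σ R) :
    mapCoeffs f (p + q) = mapCoeffs f p + mapCoeffs f q := by
  ext m
  simp only [coeff_mapCoeffs, coeff_add, map_add]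

theorem mapCoeffs_mul_X (f : R →+ S) (p : MvPolynomial σ R) (i : σ) :
    mapCoeffs f (p * X i) = mapCoeffs f p * X i := by
  classical
  ext m
  simp only [coeff_mapCoeffs, coeff_mul_X', apply_ite f, map_zero]

end MvPolynomial

theorem Derivation.apply_mvPolynomial_aeval_eq {σ R A B : Type*} [Fintype σ] [CommSemiring R]
    [CommSemiring A] [CommSemiring B] [Algebra R A] [Algebra R B] [Algebra A B]
    (D : Derivation R B B) (δ : Derivation R A A)
    (hD : ∀ a, D (algebraMap A B a) = algebraMap A B (δ a)) (x : σ → B) (p : MvPolynomial σ A) :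
    D (aeval x p) = aeval x (p.mapCoeffs (δ : A →+ A)) + ∑ i, D (x i) * aeval x (pderiv i p) := by
  classical
  induction p using MvPolynomial.induction_on with
  | C a => simp [MvPolynomial.mapCoeffs_C, hD]
  | add p q hp hq =>
    simp only [map_add, mapCoeffs_add, hp, hq, mul_add, Finset.sum_add_distrib]
    ring
  | mul_X p i hp =>
    have hpderiv (j : σ) : aeval x (pderiv j (p * X i)) =
        aeval x (pderiv j p) * x i + if i = j then aeval x p else 0 := by
      simp only [pderiv_mul, pderiv_X, Pi.single_apply, map_add, map_mul, aeval_X]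
      split_ifs <;> simp
    simp only [map_mul, aeval_X, D.leibniz, smul_eq_mul, hp, MvPolynomial.mapCoeffs_mul_X,
      hpderiv, mul_add, mul_ite, mul_zero, Finset.sum_add_distrib, Finset.sum_ite_eq,
      Finset.mem_univ, if_true]
    have hsum : x i * ∑ j, D (x j) * aeval x (pderiv j p) =
        ∑ j, D (x j) * (aeval x (pderiv j p) * x i) := by
      rw [Finset.mul_sum]
      exact Finset.sum_congr rfl fun j _ => by ring
    rw [hsum]
    ring

section Polynomial

open Polynomial

theorem Irreducible.dvd_of_eval₂_eq_zero {L M : Type*} [Field L] [CommRing M] [Nontrivial M]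
    {ψ : L →+* M} {β : M} {f g : L[X]} (hf : Irreducible f) (hfβ : f.eval₂ ψ β = 0)
    (hgβ : g.eval₂ ψ β = 0) : f ∣ g := by
  by_contra hfg
  obtain ⟨a, b, hab⟩ := hf.coprime_iff_not_dvd.2 hfg
  have := congrArg (eval₂ ψ β) hab
  simp [hfβ, hgβ] at this

theorem Irreducible.dvd_of_eval₂_eq_zero_of_injective {R M : Type*} [CommRing R] [IsDomain R]
    [IsGCDMonoid R] [Field M] {φ : R →+* M} (hφ : Function.Injective φ) {β : M} {f g : R[X]}
    (hf : Irreducible f) (hfβ : f.eval₂ φ β = 0) (hgβ : g.eval₂ φ β = 0) : f ∣ g := by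
  have hdeg : f.natDegree ≠ 0 := by
    intro h
    rw [eq_C_of_natDegree_eq_zero h, Polynomial.eval₂_C, map_eq_zero_iff φ hφ] at hfβ
    exact hf.ne_zero (by rw [eq_C_of_natDegree_eq_zero h, hfβ, map_zero])
  have hprim := hf.isPrimitive hdeg
  let ψ : FractionRing R →+* M := IsFractionRing.lift hφ
  have hψ (p : R[X]) : (p.map (algebraMap R (FractionRing R))).eval₂ ψ β = p.eval₂ φ β := by
    rw [Polynomial.eval₂_map]
    congr 1
    exact RingHom.ext (IsFractionRing.lift_algebraMap hφ)
  refine hprim.dvd_of_fraction_map_dvd_fraction_map (K := FractionRing R) ?_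
  exact (hprim.irreducible_iff_irreducible_map_fraction_map.1 hf).dvd_of_eval₂_eq_zero
    (ψ := ψ) (by rwa [hψ]) (by rwa [hψ])

end Polynomial

namespace MvPolynomial

theorem aeval_eq_eval₂_finSuccEquiv {R M : Type*} [CommSemiring R] [CommSemiring M] [Algebra R M]
    {n : ℕ} (x : Fin (n + 1) → M) (p : MvPolynomial (Fin (n + 1)) R) :
    aeval x p = (finSuccEquiv R n p).eval₂ (aeval (Fin.tail x)).toRingHom (x 0) := by
  induction p using MvPolynomial.induction_on with
  | C a => simp [finSuccEquiv_apply]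
  | add p q hp hq => simp [hp, hq]
  | mul_X p i hp =>
    induction i using Fin.cases <;>
      simp [hp, finSuccEquiv_X_zero, finSuccEquiv_X_succ, Fin.tail]

theorem dvd_of_irreducible_of_aeval_eq_zero {R M : Type*} [CommRing R] [IsDomain R]
    [UniqueFactorizationMonoid R] [Field M] [Algebra R M] {n : ℕ} {x : Fin (n + 1) → M}
    (hx : AlgebraicIndependent R (Fin.tail x)) {f g : MvPolynomial (Fin (n + 1)) R}
    (hf : Irreducible f) (hfx : aeval x f = 0) (hgx : aeval x g = 0) : f ∣ g := by
  rw [aeval_eq_eval₂_finSuccEquiv] at hfx hgx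
  rw [← map_dvd_iff (finSuccEquiv R n)]
  exact ((MulEquiv.irreducible_iff (finSuccEquiv R n)).2 hf).dvd_of_eval₂_eq_zero_of_injective
    hx hfx hgx

end MvPolynomial

theorem statement_10_general
    (K : Type*) [Field K] [CharZero K]
    (δ : Derivation ℚ K K) (t α : K)
    (M : Type*) [Field M] [CharZero M] [Algebra K M]
    (u : M) (hu : Transcendental K u)
    (D₁ D₂ : Derivation ℚ M M)
    (hD₁K : ∀ a : K, D₁ (algebraMap K M a) = 0) (hD₁u : D₁ u = 1)
    (hD₂K : ∀ a : K, D₂ (algebraMap K M a) = algebraMap K M (δ a)) (hD₂u : D₂ u = 0)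
    (F : MvPolynomial (Fin 2) K) (hFirr : Irreducible F)
    -- `Fδ` is the polynomial obtained from `F` by applying `δ` to each coefficient
    (Fδ : MvPolynomial (Fin 2) K) (hFδ : ∀ m : Fin 2 →₀ ℕ, Fδ.coeff m = δ (F.coeff m))
    (β : M) (hβ : aeval ![β, u] F = 0)
    (heq : u - D₂ β = D₁ β * (2 * β ^ 3 + algebraMap K M t * β + algebraMap K M α)) :
    F ∣ (Fδ + X 1 * pderiv 0 F + (C 2 * X 0 ^ 3 + C t * X 0 + C α) * pderiv 1 F) := by
  set c := 2 * β ^ 3 + algebraMap K M t * β + algebraMap K M α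
  let D : Derivation ℚ M M := D₂ + c • D₁
  have hDK (a : K) : D (algebraMap K M a) = algebraMap K M (δ a) := by
    simp [D, hD₁K, hD₂K]
  have hDβ : D β = u := by
    simp only [D, Derivation.coe_add, Derivation.coe_smul, Pi.add_apply, Pi.smul_apply, smul_eq_mul]
    linear_combination -heq
  have hDu : D u = c := by simp [D, hD₁u, hD₂u]
  have hFδ_eq : Fδ = F.mapCoeffs (δ : K →+ K) := by
    ext m
    simp [hFδ]
  have hchain := D.apply_mvPolynomial_aeval_eq δ hDK ![β, u] F
  rw [hβ, map_zero, Fin.sum_univ_two] at hchain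
  refine dvd_of_irreducible_of_aeval_eq_zero (x := ![β, u]) ?_ hFirr hβ ?_
  · exact algebraicIndependent_unique_type_iff.2 hu
  · simp only [map_add, map_mul, map_pow, aeval_X, aeval_C, hFδ_eq]
    simp only [Fin.isValue, Matrix.cons_val_zero, Matrix.cons_val_one, Matrix.cons_val_fin_one,
      hDβ, hDu, map_ofNat, c] at hchain ⊢
    linear_combination -hchain

/-- `K` is a field of characteristic `0` with a derivation `δ` and
`t, α ∈ K`; `M` is a field extension of `K`, `u ∈ M` is transcendental over `K`, and
`M` is algebraic over `K(u)`; `D₁`, `D₂` are derivations on `M` with `D₁` vanishing on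
`K`, `D₁(u) = 1`, `D₂` extending `δ` and `D₂(u) = 0`.  Let `F ∈ K[X₁, X₂]` be an
irreducible polynomial and `β ∈ M` with `F(β, u) = 0`.  If
`u − D₂(β) = D₁(β)·(2β³ + tβ + α)`, then `F` divides
`F^δ + X₂·F_{X₁} + (2X₁³ + tX₁ + α)·F_{X₂}` in `K[X₁, X₂]`. -/
theorem statement_10
    (K : Type*) [Field K] [CharZero K]
    (δ : Derivation ℚ K K) (t α : K)
    (M : Type*) [Field M] [CharZero M] [Algebra K M]
    (u : M) (hu : Transcendental K u)
    (hM : Algebra.IsAlgebraic (IntermediateField.adjoin K {u}) M)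
    (D₁ D₂ : Derivation ℚ M M)
    (hD₁K : ∀ a : K, D₁ (algebraMap K M a) = 0) (hD₁u : D₁ u = 1)
    (hD₂K : ∀ a : K, D₂ (algebraMap K M a) = algebraMap K M (δ a)) (hD₂u : D₂ u = 0)
    (F : MvPolynomial (Fin 2) K) (hFirr : Irreducible F)
    -- `Fδ` is the polynomial obtained from `F` by applying `δ` to each coefficient
    (Fδ : MvPolynomial (Fin 2) K) (hFδ : ∀ m : Fin 2 →₀ ℕ, Fδ.coeff m = δ (F.coeff m))
    (β : M) (hβ : aeval ![β, u] F = 0)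
    (heq : u - D₂ β = D₁ β * (2 * β ^ 3 + algebraMap K M t * β + algebraMap K M α)) :
    F ∣ (Fδ + X 1 * pderiv 0 F + (C 2 * X 0 ^ 3 + C t * X 0 + C α) * pderiv 1 F) :=
  statement_10_general K δ t α M u hu D₁ D₂ hD₁K hD₁u hD₂K hD₂u F hFirr Fδ hFδ β hβ heq
end
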